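/- arXiv:1809.05614 — 4 statements merged into one kernel-verified Lean document; each statement's English description precedes it below -/
import Mathlib

section
/- Let (ρ_j)_{j≥1} be a sequence of nonnegative reals and (b_j) a square-summable sequence of complex numbers. Suppose there are constants a_0 and C such that |∫_0^1 Σ_j e^{-v(1-v) t ρ_j} |b_j|^2 dv − a_0| ≤ C t for all t ∈ (0,1]. Then a_0 = Σ_j |b_j|^2 and Σ_j ρ_j |b_j|^2 ≤ 6C. -/
/-!
Write `φ(s) = ∫₀¹ e^{-v(1-v)s} dv`, so that the integral in the hypothesis is
`S(t) = ∑ⱼ φ(tρⱼ)|bⱼ|²`. Pointwise `x - x² ≤ 1 - e^{-x} ≤ x` for `x ≥ 0`, and integrating against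
`v(1-v)`, whose moments are `∫ v(1-v) = 1/6` and `∫ (v(1-v))² = 1/30`, gives
`s/6 - s²/30 ≤ 1 - φ(s) ≤ s/6`. The upper bound and dominated convergence give `S(t) → ∑ |bⱼ|²`
as `t → 0⁺`, which identifies `a₀`. The lower bound, summed over a finite set `F` and divided by
`t`, gives `(1/6) ∑_F ρⱼ|bⱼ|² - O_F(t) ≤ (a₀ - S(t))/t ≤ C`; letting `t → 0⁺` bounds every
partial sum of `∑ ρⱼ|bⱼ|²` by `6C`.
-/

open Set Filter Topology MeasureTheory

noncomputable def heatWeight (s : ℝ) : ℝ := ∫ v in (0:ℝ)..1, Real.exp (-(v * (1 - v) * s))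

lemma exp_neg_le_one_sub_add_sq {x : ℝ} (hx : 0 ≤ x) : Real.exp (-x) ≤ 1 - x + x ^ 2 := by
  have hpos : 0 < 1 + x := by linarith
  -- `e^{-x} ≤ 1/(1+x)` and `(1 + x)(1 - x + x²) = 1 + x³ ≥ 1`
  calc Real.exp (-x) ≤ (1 + x)⁻¹ := by
        rw [Real.exp_neg]
        exact inv_anti₀ hpos (by linarith [Real.add_one_le_exp x])
    _ ≤ 1 - x + x ^ 2 := by
        rw [inv_le_iff_one_le_mul₀ hpos]
        nlinarith [pow_nonneg hx 3]

lemma integral_mul_one_sub_mul (s : ℝ) : ∫ v in (0:ℝ)..1, v * (1 - v) * s = s / 6 := by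
  simp_rw [show ∀ v : ℝ, v * (1 - v) * s = v * s - v ^ 2 * s from fun v => by ring]
  rw [intervalIntegral.integral_sub (Continuous.intervalIntegrable (by fun_prop) _ _)
    (Continuous.intervalIntegrable (by fun_prop) _ _)]
  simp only [intervalIntegral.integral_mul_const, integral_pow, integral_id]
  ring

lemma integral_mul_one_sub_mul_sub_sq (s : ℝ) :
    ∫ v in (0:ℝ)..1, (v * (1 - v) * s - (v * (1 - v) * s) ^ 2) = s / 6 - s ^ 2 / 30 := by
  simp_rw [show ∀ v : ℝ, v * (1 - v) * s - (v * (1 - v) * s) ^ 2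
    = v * s - v ^ 2 * (s + s ^ 2) + v ^ 3 * (2 * s ^ 2) - v ^ 4 * s ^ 2 from fun v => by ring]
  rw [intervalIntegral.integral_sub (Continuous.intervalIntegrable (by fun_prop) _ _)
      (Continuous.intervalIntegrable (by fun_prop) _ _),
    intervalIntegral.integral_add (Continuous.intervalIntegrable (by fun_prop) _ _)
      (Continuous.intervalIntegrable (by fun_prop) _ _),
    intervalIntegral.integral_sub (Continuous.intervalIntegrable (by fun_prop) _ _)
      (Continuous.intervalIntegrable (by fun_prop) _ _)]
  simp only [intervalIntegral.integral_mul_const, integral_pow, integral_id]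
  ring

section heatWeight

variable {s : ℝ}

lemma mul_one_sub_mul_nonneg {v : ℝ} (hv : v ∈ Icc (0:ℝ) 1) (hs : 0 ≤ s) :
    0 ≤ v * (1 - v) * s :=
  mul_nonneg (mul_nonneg hv.1 (sub_nonneg.mpr hv.2)) hs

lemma heatWeight_nonneg (s : ℝ) : 0 ≤ heatWeight s :=
  intervalIntegral.integral_nonneg zero_le_one fun _ _ => (Real.exp_pos _).le

lemma one_sub_heatWeight (s : ℝ) :
    1 - heatWeight s = ∫ v in (0:ℝ)..1, (1 - Real.exp (-(v * (1 - v) * s))) := by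
  rw [intervalIntegral.integral_sub intervalIntegrable_const
    (Continuous.intervalIntegrable (by fun_prop) _ _)]
  simp [heatWeight]

lemma heatWeight_le_one (hs : 0 ≤ s) : heatWeight s ≤ 1 := by
  rw [← sub_nonneg, one_sub_heatWeight]
  refine intervalIntegral.integral_nonneg zero_le_one fun v hv => ?_
  rw [sub_nonneg, Real.exp_le_one_iff, neg_nonpos]
  exact mul_one_sub_mul_nonneg hv hs

lemma one_sub_heatWeight_le (s : ℝ) : 1 - heatWeight s ≤ s / 6 := by
  rw [one_sub_heatWeight, ← integral_mul_one_sub_mul]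
  refine intervalIntegral.integral_mono_on zero_le_one
    (Continuous.intervalIntegrable (by fun_prop) _ _)
    (Continuous.intervalIntegrable (by fun_prop) _ _) fun v _ => ?_
  linarith [Real.one_sub_le_exp_neg (v * (1 - v) * s)]

lemma le_one_sub_heatWeight (hs : 0 ≤ s) : s / 6 - s ^ 2 / 30 ≤ 1 - heatWeight s := by
  rw [one_sub_heatWeight, ← integral_mul_one_sub_mul_sub_sq]
  refine intervalIntegral.integral_mono_on zero_le_one
    (Continuous.intervalIntegrable (by fun_prop) _ _)
    (Continuous.intervalIntegrable (by fun_prop) _ _) fun v hv => ?_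
  linarith [exp_neg_le_one_sub_add_sq (mul_one_sub_mul_nonneg hv hs)]

lemma tendsto_heatWeight_mul {r : ℝ} (hr : 0 ≤ r) :
    Tendsto (fun t => heatWeight (t * r)) (𝓝[>] 0) (𝓝 1) := by
  have hlower : Tendsto (fun t : ℝ => 1 - t * r / 6) (𝓝[>] 0) (𝓝 1) :=
    tendsto_nhdsWithin_of_tendsto_nhds ((by fun_prop : Continuous fun t : ℝ => 1 - t * r / 6)
      |>.tendsto' 0 1 (by simp))
  refine tendsto_of_tendsto_of_tendsto_of_le_of_le' hlower tendsto_const_nhds ?_ ?_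
  all_goals filter_upwards [self_mem_nhdsWithin] with t ht
  · linarith [one_sub_heatWeight_le (t * r)]
  · exact heatWeight_le_one (mul_nonneg (le_of_lt ht) hr)

lemma heatWeight_mul_le (hs : 0 ≤ s) {x : ℝ} (hx : 0 ≤ x) : heatWeight s * x ≤ x :=
  mul_le_of_le_one_left hx (heatWeight_le_one hs)

end heatWeight

section spectralSums

variable {ι : Type*} {ρ c : ι → ℝ}

lemma summable_heatWeight_mul (hρ : ∀ j, 0 ≤ ρ j) (hc : 0 ≤ c) (hcs : Summable c) {t : ℝ}
    (ht : 0 ≤ t) : Summable fun j => heatWeight (t * ρ j) * c j :=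
  hcs.of_nonneg_of_le (fun j => mul_nonneg (heatWeight_nonneg _) (hc j))
    fun j => heatWeight_mul_le (mul_nonneg ht (hρ j)) (hc j)

lemma integral_tsum_exp_mul_eq [Countable ι] (hρ : ∀ j, 0 ≤ ρ j) (hc : 0 ≤ c) (hcs : Summable c)
    {t : ℝ} (ht : 0 ≤ t) :
    ∫ v in (0:ℝ)..1, ∑' j, Real.exp (-(v * (1 - v) * t * ρ j)) * c j
      = ∑' j, heatWeight (t * ρ j) * c j := by
  have hterm : ∀ j, ∫ v in Ioc (0:ℝ) 1, Real.exp (-(v * (1 - v) * t * ρ j)) * c j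
      = heatWeight (t * ρ j) * c j := fun j => by
    simp only [← intervalIntegral.integral_of_le zero_le_one, intervalIntegral.integral_mul_const,
      heatWeight, mul_assoc]
  have hnorm : ∀ j v, ‖Real.exp (-(v * (1 - v) * t * ρ j)) * c j‖
      = Real.exp (-(v * (1 - v) * t * ρ j)) * c j := fun j v =>
    Real.norm_of_nonneg (mul_nonneg (Real.exp_pos _).le (hc j))
  rw [intervalIntegral.integral_of_le zero_le_one, ← integral_tsum_of_summable_integral_norm
    (fun j => (Continuous.integrableOn_Ioc (by fun_prop)))]
  · exact tsum_congr hterm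
  · simp_rw [hnorm, hterm]
    exact summable_heatWeight_mul hρ hc hcs ht

lemma tendsto_tsum_heatWeight_mul (hρ : ∀ j, 0 ≤ ρ j) (hc : 0 ≤ c) (hcs : Summable c) :
    Tendsto (fun t => ∑' j, heatWeight (t * ρ j) * c j) (𝓝[>] 0) (𝓝 (∑' j, c j)) := by
  refine tendsto_tsum_of_dominated_convergence hcs
    (fun j => by simpa using (tendsto_heatWeight_mul (hρ j)).mul_const (c j)) ?_
  filter_upwards [self_mem_nhdsWithin] with t ht j
  rw [Real.norm_of_nonneg (mul_nonneg (heatWeight_nonneg _) (hc j))]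
  exact heatWeight_mul_le (mul_nonneg (le_of_lt ht) (hρ j)) (hc j)

lemma sum_mul_le_of_tsum_sub_tsum_heatWeight_le (hρ : ∀ j, 0 ≤ ρ j) (hc : 0 ≤ c)
    (hcs : Summable c) {C : ℝ}
    (hS : ∀ t ∈ Ioc (0:ℝ) 1, ∑' j, c j - ∑' j, heatWeight (t * ρ j) * c j ≤ C * t)
    (F : Finset ι) : ∑ j ∈ F, ρ j * c j ≤ 6 * C := by
  set A := ∑ j ∈ F, ρ j * c j
  set B := ∑ j ∈ F, ρ j ^ 2 * c j
  have hsmall : ∀ t ∈ Ioc (0:ℝ) 1, A / 6 - t * B / 30 ≤ C := by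
    intro t ht
    have hws := summable_heatWeight_mul hρ hc hcs ht.1.le
    have hpartial : ∑ j ∈ F, (c j - heatWeight (t * ρ j) * c j)
        ≤ ∑' j, c j - ∑' j, heatWeight (t * ρ j) * c j := by
      rw [← hcs.tsum_sub hws]
      exact (hcs.sub hws).sum_le_tsum F fun j _ =>
        sub_nonneg.mpr (heatWeight_mul_le (mul_nonneg ht.1.le (hρ j)) (hc j))
    have hlower : t * (A / 6 - t * B / 30) ≤ ∑ j ∈ F, (c j - heatWeight (t * ρ j) * c j) := by
      rw [show t * (A / 6 - t * B / 30)
          = ∑ j ∈ F, (t * ρ j / 6 - (t * ρ j) ^ 2 / 30) * c j by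
        simp only [A, B, Finset.mul_sum, Finset.sum_div, ← Finset.sum_sub_distrib]
        exact Finset.sum_congr rfl fun j _ => by ring]
      refine Finset.sum_le_sum fun j _ => ?_
      simpa only [one_sub_mul] using mul_le_mul_of_nonneg_right
        (le_one_sub_heatWeight (mul_nonneg ht.1.le (hρ j))) (hc j)
    exact le_of_mul_le_mul_left (by linarith [hS t ht]) ht.1
  have hlim : Tendsto (fun t : ℝ => A / 6 - t * B / 30) (𝓝[>] 0) (𝓝 (A / 6)) :=
    tendsto_nhdsWithin_of_tendsto_nhds ((by fun_prop : Continuous fun t : ℝ => A / 6 - t * B / 30)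
      |>.tendsto' 0 (A / 6) (by simp))
  have hA : A / 6 ≤ C := le_of_tendsto hlim (eventually_of_mem (Ioc_mem_nhdsGT one_pos) hsmall)
  linarith

end spectralSums

/-- First-order heat trace bound implies `H¹`-type regularity of the spectral sequence:
if `|∫_0^1 ∑_j e^{-v(1-v)tρ_j}|b_j|² dv − a₀| ≤ C t` on `(0,1]`, then
`a₀ = ∑ |b_j|²` and `∑ ρ_j |b_j|² ≤ 6C`. -/
theorem stmt_2 (ρ : ℕ → ℝ) (hρ : ∀ j, 0 ≤ ρ j) (b : ℕ → ℂ)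
    (hb : Summable fun j => ‖b j‖ ^ 2) (a₀ C : ℝ)
    (h : ∀ t ∈ Ioc (0:ℝ) 1,
      |(∫ v in (0:ℝ)..1, ∑' j, Real.exp (-(v * (1 - v) * t * ρ j)) * ‖b j‖ ^ 2) - a₀|
        ≤ C * t) :
    a₀ = (∑' j, ‖b j‖ ^ 2) ∧
      Summable (fun j => ρ j * ‖b j‖ ^ 2) ∧
      (∑' j, ρ j * ‖b j‖ ^ 2) ≤ 6 * C := by
  set c : ℕ → ℝ := fun j => ‖b j‖ ^ 2
  have hc : 0 ≤ c := fun j => by positivity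
  have hS : ∀ t ∈ Ioc (0:ℝ) 1, |∑' j, heatWeight (t * ρ j) * c j - a₀| ≤ C * t := fun t ht => by
    rw [← integral_tsum_exp_mul_eq hρ hc hb ht.1.le]
    exact h t ht
  have ha₀ : a₀ = ∑' j, c j := by
    refine tendsto_nhds_unique ?_ (tendsto_tsum_heatWeight_mul hρ hc hb)
    rw [tendsto_iff_norm_sub_tendsto_zero]
    exact squeeze_zero' (Eventually.of_forall fun _ => norm_nonneg _)
      (eventually_of_mem (Ioc_mem_nhdsGT one_pos) hS) (tendsto_nhdsWithin_of_tendsto_nhds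
        ((by fun_prop : Continuous fun t : ℝ => C * t).tendsto' 0 0 (by simp)))
  have hpartial : ∀ F : Finset ℕ, ∑ j ∈ F, ρ j * c j ≤ 6 * C :=
    sum_mul_le_of_tsum_sub_tsum_heatWeight_le hρ hc hb fun t ht => by
      linarith [(abs_le.mp (hS t ht)).1]
  have hsum : Summable fun j => ρ j * c j :=
    summable_of_sum_le (fun j => mul_nonneg (hρ j) (hc j)) hpartial
  exact ⟨ha₀, hsum, hsum.tsum_le_of_sum_le hpartial⟩
end

section
/- Let (ρ_j)_{j≥1} be nonnegative reals, (b_j) ∈ ℓ², and m ≥ 1 an integer with Σ_j ρ_j^{m-1} |b_j|^2 < ∞. Suppose there exist constants a_0, ..., a_{m-1} and C_m such that for all t ∈ (0,1], |∫_0^1 Σ_j e^{-v(1-v) t ρ_j} |b_j|^2 dv − Σ_{k=0}^{m-1} a_k t^k| ≤ C_m t^m. Then Σ_j ρ_j^m |b_j|^2 ≤ m! C_m / B(m+1,m+1), where B(m+1,m+1) = ∫_0^1 v^m (1-v)^m dv. -/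
open Set Filter MeasureTheory


noncomputable def Efn (m : ℕ) (x : ℝ) : ℝ :=
  (-1 : ℝ)^m * (Real.exp (-x) - ∑ k ∈ Finset.range m, (-x)^k / (Nat.factorial k))

lemma Efn_zero (x : ℝ) : Efn 0 x = Real.exp (-x) := by simp [Efn]

lemma Efn_succ (m : ℕ) (x : ℝ) :
    Efn (m+1) x = x^m / (Nat.factorial m) - Efn m x := by
  have h3 : ((-1:ℝ)^m)*((-1:ℝ)^m) = 1 := by
    rw [← pow_add, ← two_mul, pow_mul]; norm_num
  simp only [Efn, Finset.sum_range_succ, neg_pow x, pow_succ]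
  linear_combination (x ^ m / (Nat.factorial m : ℝ)) * h3

lemma Efn_at_zero (m : ℕ) : Efn (m+1) 0 = 0 := by
  have h : ∑ k ∈ Finset.range (m+1), (-(0:ℝ))^k / (Nat.factorial k) = 1 := by
    rw [Finset.sum_eq_single 0] <;> simp +contextual [zero_pow]
  unfold Efn
  rw [h]
  simp

lemma Efn_continuous (m : ℕ) : Continuous (Efn m) := by
  unfold Efn
  exact continuous_const.mul ((Real.continuous_exp.comp continuous_neg).sub
    (continuous_finset_sum _ fun k _ => (continuous_neg.pow k).div_const _))

lemma hasDerivAt_Efn (m : ℕ) (x : ℝ) : HasDerivAt (Efn (m+1)) (Efn m x) x := by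
  induction m generalizing x with
  | zero =>
    have h : Efn 1 = (fun y : ℝ => 1 - Real.exp (-y)) := by
      funext y; rw [Efn_succ, Efn_zero]; simp
    rw [h, Efn_zero]
    have he : HasDerivAt (fun y : ℝ => Real.exp (-y)) (Real.exp (-x) * (-1)) x :=
      (Real.hasDerivAt_exp (-x)).comp x (hasDerivAt_neg x)
    have h2 : HasDerivAt (fun y : ℝ => 1 - Real.exp (-y)) (0 - Real.exp (-x) * (-1)) x :=
      (hasDerivAt_const x (1:ℝ)).sub he
    simpa using h2
  | succ n ih =>
    have h : Efn (n+2) = (fun y : ℝ => y^(n+1) / (Nat.factorial (n+1)) - Efn (n+1) y) := by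
      funext y; rw [Efn_succ]
    rw [h, Efn_succ]
    have h1 : HasDerivAt (fun y : ℝ => y^(n+1) / (Nat.factorial (n+1)))
        (x^n / (Nat.factorial n)) x := by
      have := (hasDerivAt_pow (n+1) x).div_const ((Nat.factorial (n+1) : ℝ))
      refine HasDerivAt.congr_deriv this ?_
      rw [Nat.add_sub_cancel]
      push_cast
      have hfac : ((Nat.factorial (n+1) : ℝ)) = (n+1) * Nat.factorial n := by
        push_cast [Nat.factorial_succ]; ring
      rw [hfac]
      have : (Nat.factorial n : ℝ) ≠ 0 := Nat.cast_ne_zero.2 (Nat.factorial_ne_zero n)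
      field_simp
    exact h1.sub (ih x)

lemma le_of_deriv_le {f g f' g' : ℝ → ℝ}
    (hf : ∀ x, HasDerivAt f (f' x) x) (hg : ∀ x, HasDerivAt g (g' x) x)
    (h0 : f 0 ≤ g 0) (hle : ∀ x, 0 ≤ x → f' x ≤ g' x) :
    ∀ x, 0 ≤ x → f x ≤ g x := by
  intro x hx
  have hd : ∀ y, HasDerivAt (fun z => g z - f z) (g' y - f' y) y := fun y => (hg y).sub (hf y)
  have hmono : MonotoneOn (fun z => g z - f z) (Ici 0) := by
    apply monotoneOn_of_deriv_nonneg (convex_Ici 0)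
    · exact fun y _ => ((hd y).differentiableAt).continuousAt.continuousWithinAt
    · exact fun y _ => ((hd y).differentiableAt).differentiableWithinAt
    · intro y hy
      rw [(hd y).deriv]
      rw [interior_Ici] at hy
      exact sub_nonneg.2 (hle y (le_of_lt hy))
  have h2 := hmono (self_mem_Ici) (mem_Ici.2 hx) hx
  simp only at h2
  linarith

lemma Efn_bounds (m : ℕ) : ∀ x : ℝ, 0 ≤ x →
    x^m * Real.exp (-x) / (Nat.factorial m) ≤ Efn m x ∧ Efn m x ≤ x^m / (Nat.factorial m) := by
  induction m with
  | zero =>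
    intro x hx
    constructor
    · simp [Efn_zero]
    · simp only [Efn_zero, pow_zero, Nat.factorial_zero, Nat.cast_one]
      rw [div_one]
      exact Real.exp_le_one_iff.2 (by linarith)
  | succ n ih =>
    intro x hx
    have hfacn : (0:ℝ) < Nat.factorial n := by positivity
    have hfacn1 : (0:ℝ) < Nat.factorial (n+1) := by positivity
    have hfacs : ((Nat.factorial (n+1) : ℝ)) = (n+1) * Nat.factorial n := by
      push_cast [Nat.factorial_succ]; ring
    constructor
    · -- lower bound
      refine le_of_deriv_le
        (f := fun y => y^(n+1) * Real.exp (-y) / (Nat.factorial (n+1))) (g := Efn (n+1))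
        (f' := fun y => ((n+1:ℝ) * y^n * Real.exp (-y) + y^(n+1) * (Real.exp (-y) * (-1))) / (Nat.factorial (n+1)))
        (g' := Efn n) ?_ (hasDerivAt_Efn n) ?_ ?_ x hx
      · intro y
        have hp : HasDerivAt (fun z : ℝ => z^(n+1)) ((n+1:ℝ) * y^n) y := by
          simpa using hasDerivAt_pow (n+1) y
        have he : HasDerivAt (fun z : ℝ => Real.exp (-z)) (Real.exp (-y) * (-1)) y :=
          (Real.hasDerivAt_exp (-y)).comp y (hasDerivAt_neg y)
        simpa [mul_comm, div_eq_mul_inv, mul_assoc, mul_add, add_mul] using (hp.mul he).div_const ((Nat.factorial (n+1) : ℝ))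
      · rw [Efn_at_zero]; simp
      · intro y hy
        have h1 : ((n+1:ℝ) * y^n * Real.exp (-y) + y^(n+1) * (Real.exp (-y) * (-1))) / (Nat.factorial (n+1))
            ≤ y^n * Real.exp (-y) / (Nat.factorial n) := by
          rw [div_le_div_iff₀ hfacn1 hfacn, hfacs]
          have he : 0 ≤ Real.exp (-y) := (Real.exp_pos _).le
          have hyn : 0 ≤ y^(n+1) * Real.exp (-y) := by positivity
          nlinarith [hfacn]
        exact h1.trans (ih y hy).1
    · -- upper bound
      refine le_of_deriv_le (f := Efn (n+1)) (g := fun y => y^(n+1) / (Nat.factorial (n+1)))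
        (f' := Efn n)
        (g' := fun y => ((n+1:ℝ) * y^n) / (Nat.factorial (n+1)))
        (hasDerivAt_Efn n) ?_ ?_ ?_ x hx
      · intro y
        simpa using (hasDerivAt_pow (n+1) y).div_const ((Nat.factorial (n+1) : ℝ))
      · rw [Efn_at_zero]; simp
      · intro y hy
        have := (ih y hy).2
        have h2 : y^n / (Nat.factorial n) = ((n+1:ℝ) * y^n) / (Nat.factorial (n+1)) := by
          rw [hfacs]; field_simp
        linarith [h2 ▸ this]

lemma Efn_nonneg (m : ℕ) (x : ℝ) (hx : 0 ≤ x) : 0 ≤ Efn m x := by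
  have := (Efn_bounds m x hx).1
  have h : 0 ≤ x^m * Real.exp (-x) / (Nat.factorial m) := by positivity
  linarith

lemma Efn_succ_le (m : ℕ) (x : ℝ) (hx : 0 ≤ x) :
    Efn (m+1) x ≤ x^m / (Nat.factorial m) := by
  rw [Efn_succ]
  have := Efn_nonneg m x hx
  linarith

lemma poly_zero : ∀ (n : ℕ) (d : ℕ → ℝ),
    Tendsto (fun t : ℝ => (∑ k ∈ Finset.range (n+1), d k * t^k) / t^n)
      (nhdsWithin 0 (Ioi 0)) (nhds 0) →
    ∀ k, k < n+1 → d k = 0 := by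
  intro n
  induction n with
  | zero =>
    intro d hd k hk
    interval_cases k
    have h1 : Tendsto (fun t : ℝ => (∑ k ∈ Finset.range 1, d k * t^k) / t^0)
        (nhdsWithin 0 (Ioi 0)) (nhds (d 0)) := by
      simpa using tendsto_const_nhds
    exact tendsto_nhds_unique h1 hd
  | succ n ih =>
    intro d hd
    have hpolycont : Tendsto (fun t : ℝ => ∑ k ∈ Finset.range (n+2), d k * t^k)
        (nhdsWithin 0 (Ioi 0)) (nhds (d 0)) := by
      have hc : Tendsto (fun t : ℝ => ∑ k ∈ Finset.range (n+2), d k * t^k)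
          (nhds 0) (nhds (∑ k ∈ Finset.range (n+2), d k * (0:ℝ)^k)) := by
        apply Continuous.tendsto
        exact continuous_finset_sum _ fun k _ => continuous_const.mul (continuous_pow k)
      have hval : ∑ k ∈ Finset.range (n+2), d k * (0:ℝ)^k = d 0 := by
        rw [Finset.sum_eq_single 0] <;> simp +contextual [zero_pow]
      rw [hval] at hc
      exact hc.mono_left nhdsWithin_le_nhds
    have hzero : Tendsto (fun t : ℝ => ∑ k ∈ Finset.range (n+2), d k * t^k)
        (nhdsWithin 0 (Ioi 0)) (nhds 0) := by
      have hpow : Tendsto (fun t : ℝ => t^(n+1)) (nhdsWithin 0 (Ioi 0)) (nhds 0) := by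
        have : Tendsto (fun t : ℝ => t^(n+1)) (nhds 0) (nhds ((0:ℝ)^(n+1))) :=
          (continuous_pow (n+1)).tendsto 0
        simpa [zero_pow] using this.mono_left nhdsWithin_le_nhds
      have := hd.mul hpow
      rw [zero_mul] at this
      apply this.congr'
      filter_upwards [self_mem_nhdsWithin] with t ht
      have ht' : t ≠ 0 := ne_of_gt ht
      field_simp
    have h0 : d 0 = 0 := tendsto_nhds_unique hpolycont hzero
    have hshift : Tendsto (fun t : ℝ => (∑ k ∈ Finset.range (n+1), d (k+1) * t^k) / t^n)
        (nhdsWithin 0 (Ioi 0)) (nhds 0) := by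
      apply hd.congr'
      filter_upwards [self_mem_nhdsWithin] with t ht
      have ht' : t ≠ 0 := ne_of_gt ht
      have hsum : ∑ k ∈ Finset.range (n+2), d k * t^k
          = t * ∑ k ∈ Finset.range (n+1), d (k+1) * t^k := by
        rw [Finset.sum_range_succ' (fun k => d k * t^k) (n+1), h0, Finset.mul_sum]
        simp only [zero_mul, add_zero]
        exact Finset.sum_congr rfl fun k _ => by ring
      rw [hsum, pow_succ]
      field_simp
    intro k hk
    cases k with
    | zero => exact h0
    | succ k => exact ih (fun k => d (k+1)) hshift k (by omega)

open scoped Nat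

/-- Higher-order version: an `m`-th order expansion of the spectral integral, together
with finiteness of the `(m-1)`-st moment, forces the `m`-th moment bound
`∑ ρ_j^m |b_j|² ≤ m! C_m / ∫_0^1 v^m (1-v)^m dv`. -/

theorem stmt_3 (ρ : ℕ → ℝ) (hρ : ∀ j, 0 ≤ ρ j) (b : ℕ → ℂ)
    (hb : Summable fun j => ‖b j‖ ^ 2) (m : ℕ) (hm : 1 ≤ m)
    (hmom : Summable fun j => ρ j ^ (m - 1) * ‖b j‖ ^ 2)
    (a : ℕ → ℝ) (Cm : ℝ)
    (h : ∀ t ∈ Ioc (0:ℝ) 1,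
      |(∫ v in (0:ℝ)..1, ∑' j, Real.exp (-(v * (1 - v) * t * ρ j)) * ‖b j‖ ^ 2)
          - ∑ k ∈ Finset.range m, a k * t ^ k| ≤ Cm * t ^ m) :
    Summable (fun j => ρ j ^ m * ‖b j‖ ^ 2) ∧
      (∑' j, ρ j ^ m * ‖b j‖ ^ 2)
        ≤ (Nat.factorial m) * Cm / ∫ v in (0:ℝ)..1, v ^ m * (1 - v) ^ m := by
  obtain ⟨n, rfl⟩ : ∃ n, m = n + 1 := ⟨m - 1, (Nat.succ_pred_eq_of_pos hm).symm⟩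
  simp only [Nat.add_sub_cancel] at hmom
  have hnb : ∀ j, (0:ℝ) ≤ ‖b j‖ ^ 2 := fun j => by positivity
  have hfac : ∀ k : ℕ, (0:ℝ) < (Nat.factorial k : ℝ) := fun k =>
    Nat.cast_pos.2 (Nat.factorial_pos k)
  -- the Beta-type integrals
  set B : ℕ → ℝ := fun k => ∫ v in (0:ℝ)..1, (v * (1 - v)) ^ k with hBdef
  have hBint : ∀ k : ℕ, IntervalIntegrable (fun v : ℝ => (v * (1 - v)) ^ k) volume 0 1 :=
    fun k => (by fun_prop : Continuous fun v : ℝ => (v * (1 - v)) ^ k).intervalIntegrable 0 1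
  have hBpos : ∀ k, 0 < B k := by
    intro k
    apply intervalIntegral.intervalIntegral_pos_of_pos_on (hBint k) _ zero_lt_one
    intro v hv
    have : 0 < v * (1 - v) := mul_pos hv.1 (by linarith [hv.2])
    exact pow_pos this k
  -- summability of lower moments
  have hmomk : ∀ k, k ≤ n → Summable (fun j => ρ j ^ k * ‖b j‖ ^ 2) := by
    intro k hk
    apply Summable.of_nonneg_of_le
      (fun j => mul_nonneg (pow_nonneg (hρ j) _) (hnb j)) _ (hb.add hmom)
    intro j
    rcases le_total (ρ j) 1 with h1 | h1
    · have h2 : ρ j ^ k ≤ 1 := pow_le_one₀ (hρ j) h1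
      have h3 : 0 ≤ ρ j ^ n * ‖b j‖ ^ 2 := mul_nonneg (pow_nonneg (hρ j) _) (hnb j)
      nlinarith [hnb j]
    · have h2 : ρ j ^ k ≤ ρ j ^ n := pow_le_pow_right₀ h1 hk
      nlinarith [hnb j]
  -- remainder integrals
  set I : ℕ → ℝ → ℝ := fun j t => ∫ v in (0:ℝ)..1, Efn (n+1) (v * (1 - v) * t * ρ j) with hIdef
  have hargnn : ∀ (t : ℝ), 0 ≤ t → ∀ j, ∀ v ∈ Icc (0:ℝ) 1, 0 ≤ v * (1 - v) * t * ρ j := by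
    intro t ht j v hv
    have h1 : 0 ≤ 1 - v := by linarith [hv.2]
    exact mul_nonneg (mul_nonneg (mul_nonneg hv.1 h1) ht) (hρ j)
  have hcontE : ∀ (t : ℝ) (j : ℕ), Continuous (fun v : ℝ => Efn (n+1) (v * (1 - v) * t * ρ j)) :=
    fun t j => (Efn_continuous (n+1)).comp (by fun_prop)
  -- the per-index decomposition of the exponential integral
  have hJ : ∀ (t : ℝ), 0 ≤ t → ∀ j,
      (∫ v in (0:ℝ)..1, Real.exp (-(v * (1 - v) * t * ρ j)))
        = (∑ k ∈ Finset.range (n+1), (-1:ℝ)^k * (t * ρ j)^k * B k / (Nat.factorial k))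
          + (-1:ℝ)^(n+1) * I j t := by
    intro t ht j
    have hsq : ((-1:ℝ)^(n+1)) * ((-1:ℝ)^(n+1)) = 1 := by
      rw [← pow_add, ← two_mul, pow_mul]; norm_num
    have hpt : ∀ v : ℝ, Real.exp (-(v * (1 - v) * t * ρ j))
        = (∑ k ∈ Finset.range (n+1),
            ((-1:ℝ)^k * (t * ρ j)^k / (Nat.factorial k)) * (v * (1 - v))^k)
          + (-1:ℝ)^(n+1) * Efn (n+1) (v * (1 - v) * t * ρ j) := by
      intro v
      have hxpow : ∀ k : ℕ, (-(v * (1 - v) * t * ρ j))^k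
          = (-1:ℝ)^k * (v * (1 - v))^k * (t * ρ j)^k := by
        intro k
        have hx : v * (1 - v) * t * ρ j = (v * (1 - v)) * (t * ρ j) := by ring
        rw [hx, neg_pow, mul_pow]
        ring
      simp only [Efn, ← mul_assoc, hsq, one_mul]
      rw [Finset.sum_congr rfl (fun k _ => by rw [hxpow k]; ring :
        ∀ k ∈ Finset.range (n+1), (-(v * (1 - v) * t * ρ j))^k / (Nat.factorial k)
          = ((-1:ℝ)^k * (t * ρ j)^k / (Nat.factorial k)) * (v * (1 - v))^k)]
      ring
    calc (∫ v in (0:ℝ)..1, Real.exp (-(v * (1 - v) * t * ρ j)))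
        = ∫ v in (0:ℝ)..1, ((∑ k ∈ Finset.range (n+1),
            ((-1:ℝ)^k * (t * ρ j)^k / (Nat.factorial k)) * (v * (1 - v))^k)
          + (-1:ℝ)^(n+1) * Efn (n+1) (v * (1 - v) * t * ρ j)) := by
          simp only [hpt]
      _ = (∑ k ∈ Finset.range (n+1), (-1:ℝ)^k * (t * ρ j)^k * B k / (Nat.factorial k))
          + (-1:ℝ)^(n+1) * I j t := by
          rw [intervalIntegral.integral_add
            (g := fun v : ℝ => (-1:ℝ)^(n+1) * Efn (n+1) (v * (1 - v) * t * ρ j))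
            ((by fun_prop : Continuous fun v : ℝ => (∑ k ∈ Finset.range (n+1),
              ((-1:ℝ)^k * (t * ρ j)^k / (Nat.factorial k)) * (v * (1 - v))^k)).intervalIntegrable 0 1)
            ((continuous_const.mul (hcontE t j) : Continuous fun v : ℝ => (-1:ℝ)^(n+1) * Efn (n+1) (v * (1 - v) * t * ρ j)).intervalIntegrable 0 1)]
          rw [intervalIntegral.integral_finset_sum
            (f := fun k (v : ℝ) => ((-1:ℝ)^k * (t * ρ j)^k / (Nat.factorial k)) * (v*(1-v))^k)
            (fun k _ => (continuous_const.mul ((by fun_prop : Continuous fun v : ℝ => (v*(1-v))^k)) : Continuous fun v : ℝ => ((-1:ℝ)^k * (t * ρ j)^k / (Nat.factorial k)) * (v*(1-v))^k).intervalIntegrable 0 1)]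
          rw [intervalIntegral.integral_const_mul]
          congr 1
          apply Finset.sum_congr rfl
          intro k _
          rw [intervalIntegral.integral_const_mul]
          ring
  -- bounds for the remainder integrals
  have hInonneg : ∀ (t : ℝ), 0 ≤ t → ∀ j, 0 ≤ I j t := by
    intro t ht j
    apply intervalIntegral.integral_nonneg zero_le_one
    intro v hv
    exact Efn_nonneg _ _ (hargnn t ht j v hv)
  have hIub : ∀ (t : ℝ), 0 ≤ t → ∀ j,
      I j t ≤ (t * ρ j)^(n+1) / (Nat.factorial (n+1)) * B (n+1) := by
    intro t ht j
    have := intervalIntegral.integral_mono_on (μ := volume) zero_le_one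
      ((hcontE t j).intervalIntegrable 0 1)
      ((continuous_const.mul ((by fun_prop : Continuous fun v : ℝ => (v*(1-v))^(n+1)))).intervalIntegrable 0 1)
      (fun v hv => by
        have hx := hargnn t ht j v hv
        have h2 := (Efn_bounds (n+1) _ hx).2
        have hxeq : (v * (1 - v) * t * ρ j)^(n+1) = (v * (1-v))^(n+1) * (t * ρ j)^(n+1) := by
          rw [show v * (1 - v) * t * ρ j = (v * (1-v)) * (t * ρ j) by ring, mul_pow]
        calc Efn (n+1) (v * (1 - v) * t * ρ j)
            ≤ (v * (1 - v) * t * ρ j)^(n+1) / (Nat.factorial (n+1)) := h2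
          _ = ((t * ρ j)^(n+1) / (Nat.factorial (n+1))) * (v * (1-v))^(n+1) := by
              rw [hxeq]; ring)
    calc I j t ≤ ∫ v in (0:ℝ)..1, ((t * ρ j)^(n+1) / (Nat.factorial (n+1))) * (v * (1-v))^(n+1) := this
      _ = (t * ρ j)^(n+1) / (Nat.factorial (n+1)) * B (n+1) := by
          rw [intervalIntegral.integral_const_mul]
  have hIub' : ∀ (t : ℝ), 0 ≤ t → ∀ j,
      I j t ≤ (t * ρ j)^n / (Nat.factorial n) * B n := by
    intro t ht j
    have := intervalIntegral.integral_mono_on (μ := volume) zero_le_one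
      ((hcontE t j).intervalIntegrable 0 1)
      ((continuous_const.mul ((by fun_prop : Continuous fun v : ℝ => (v*(1-v))^n))).intervalIntegrable 0 1)
      (fun v hv => by
        have hx := hargnn t ht j v hv
        have h2 := Efn_succ_le n _ hx
        have hxeq : (v * (1 - v) * t * ρ j)^n = (v * (1-v))^n * (t * ρ j)^n := by
          rw [show v * (1 - v) * t * ρ j = (v * (1-v)) * (t * ρ j) by ring, mul_pow]
        calc Efn (n+1) (v * (1 - v) * t * ρ j)
            ≤ (v * (1 - v) * t * ρ j)^n / (Nat.factorial n) := h2
          _ = ((t * ρ j)^n / (Nat.factorial n)) * (v * (1-v))^n := by rw [hxeq]; ring)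
    calc I j t ≤ ∫ v in (0:ℝ)..1, ((t * ρ j)^n / (Nat.factorial n)) * (v * (1-v))^n := this
      _ = (t * ρ j)^n / (Nat.factorial n) * B n := by
          rw [intervalIntegral.integral_const_mul]
  have hIlb : ∀ (t : ℝ), 0 ≤ t → ∀ j,
      (t * ρ j)^(n+1) / (Nat.factorial (n+1)) * Real.exp (-(t * ρ j)) * B (n+1) ≤ I j t := by
    intro t ht j
    have := intervalIntegral.integral_mono_on (μ := volume) zero_le_one
      ((continuous_const.mul ((by fun_prop : Continuous fun v : ℝ => (v*(1-v))^(n+1)))).intervalIntegrable 0 1)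
      ((hcontE t j).intervalIntegrable 0 1)
      (fun v hv => by
        have hx := hargnn t ht j v hv
        have h2 := (Efn_bounds (n+1) _ hx).1
        have hv1 : 0 ≤ v := hv.1
        have hv2 : 0 ≤ 1 - v := by linarith [hv.2]
        have hw1 : v * (1 - v) ≤ 1 := by nlinarith
        have hxle : v * (1 - v) * t * ρ j ≤ t * ρ j := by
          have h0 : 0 ≤ t * ρ j := mul_nonneg ht (hρ j)
          nlinarith
        have hexp : Real.exp (-(t * ρ j)) ≤ Real.exp (-(v * (1 - v) * t * ρ j)) :=
          Real.exp_le_exp.2 (by linarith)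
        have hxeq : (v * (1 - v) * t * ρ j)^(n+1) = (v * (1-v))^(n+1) * (t * ρ j)^(n+1) := by
          rw [show v * (1 - v) * t * ρ j = (v * (1-v)) * (t * ρ j) by ring, mul_pow]
        calc ((t * ρ j)^(n+1) / (Nat.factorial (n+1)) * Real.exp (-(t * ρ j))) * (v * (1-v))^(n+1)
            ≤ ((t * ρ j)^(n+1) / (Nat.factorial (n+1)) * Real.exp (-(v * (1 - v) * t * ρ j))) * (v * (1-v))^(n+1) := by
              have hpn : (0:ℝ) ≤ (v * (1-v))^(n+1) := pow_nonneg (mul_nonneg hv1 hv2) _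
              have hcn : (0:ℝ) ≤ (t * ρ j)^(n+1) / (Nat.factorial (n+1)) := by
                have := mul_nonneg ht (hρ j)
                positivity
              exact mul_le_mul_of_nonneg_right (mul_le_mul_of_nonneg_left hexp hcn) hpn
          _ = (v * (1 - v) * t * ρ j)^(n+1) * Real.exp (-(v * (1 - v) * t * ρ j)) / (Nat.factorial (n+1)) := by
              rw [hxeq]; ring
          _ ≤ Efn (n+1) (v * (1 - v) * t * ρ j) := h2)
    calc (t * ρ j)^(n+1) / (Nat.factorial (n+1)) * Real.exp (-(t * ρ j)) * B (n+1)
        = ∫ v in (0:ℝ)..1, ((t * ρ j)^(n+1) / (Nat.factorial (n+1)) * Real.exp (-(t * ρ j))) * (v * (1-v))^(n+1) := by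
          rw [intervalIntegral.integral_const_mul]
      _ ≤ I j t := this
  -- summability of the remainder terms
  have hIsum : ∀ (t : ℝ), 0 ≤ t → Summable (fun j => ‖b j‖ ^ 2 * I j t) := by
    intro t ht
    refine Summable.of_nonneg_of_le
      (fun j => mul_nonneg (hnb j) (hInonneg t ht j))
      (fun j => ?_)
      ((hmomk n le_rfl).mul_left (t^n * B n / (Nat.factorial n)))
    calc ‖b j‖ ^ 2 * I j t ≤ ‖b j‖ ^ 2 * ((t * ρ j)^n / (Nat.factorial n) * B n) :=
        mul_le_mul_of_nonneg_left (hIub' t ht j) (hnb j)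
      _ = (t^n * B n / (Nat.factorial n)) * (ρ j ^ n * ‖b j‖ ^ 2) := by
        rw [mul_pow]; ring
  set G : ℝ → ℝ := fun t => ∑' j, ‖b j‖ ^ 2 * I j t with hGdef
  have hGnonneg : ∀ (t : ℝ), 0 ≤ t → 0 ≤ G t := fun t ht =>
    tsum_nonneg (fun j => mul_nonneg (hnb j) (hInonneg t ht j))
  set M : ℕ → ℝ := fun k => ∑' j, ρ j ^ k * ‖b j‖ ^ 2 with hMdef
  set c : ℕ → ℝ := fun k => ((-1:ℝ)^k * B k / (Nat.factorial k)) * M k with hcdef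
  -- the key decomposition of the spectral integral
  have hF : ∀ (t : ℝ), 0 ≤ t →
      (∫ v in (0:ℝ)..1, ∑' j, Real.exp (-(v * (1 - v) * t * ρ j)) * ‖b j‖ ^ 2)
        = (∑ k ∈ Finset.range (n+1), c k * t ^ k) + (-1:ℝ)^(n+1) * G t := by
    intro t ht
    have hmeas : ∀ j : ℕ, AEStronglyMeasurable
        (fun v : ℝ => Real.exp (-(v * (1 - v) * t * ρ j)) * ‖b j‖ ^ 2)
        (volume.restrict (Ioc (0:ℝ) 1)) :=
      fun j => ((by fun_prop : Continuous fun v : ℝ =>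
        Real.exp (-(v * (1 - v) * t * ρ j)) * ‖b j‖ ^ 2)).aestronglyMeasurable
    have hfin : (∑' j : ℕ, ∫⁻ v in Ioc (0:ℝ) 1,
        ‖Real.exp (-(v * (1 - v) * t * ρ j)) * ‖b j‖ ^ 2‖₊) ≠ ⊤ := by
      apply ne_top_of_le_ne_top (b := ∑' j : ℕ, ENNReal.ofReal (‖b j‖ ^ 2))
      · rw [← ENNReal.ofReal_tsum_of_nonneg hnb hb]
        exact ENNReal.ofReal_ne_top
      apply ENNReal.tsum_le_tsum
      intro j
      have hbd : ∀ v ∈ Ioc (0:ℝ) 1,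
          (‖Real.exp (-(v * (1 - v) * t * ρ j)) * ‖b j‖ ^ 2‖₊ : ENNReal)
            ≤ ENNReal.ofReal (‖b j‖ ^ 2) := by
        intro v hv
        have hx : 0 ≤ v * (1 - v) * t * ρ j := hargnn t ht j v ⟨hv.1.le, hv.2⟩
        have hexp1 : Real.exp (-(v * (1 - v) * t * ρ j)) ≤ 1 :=
          Real.exp_le_one_iff.2 (by linarith)
        have hnn : 0 ≤ Real.exp (-(v * (1 - v) * t * ρ j)) * ‖b j‖ ^ 2 :=
          mul_nonneg (Real.exp_pos _).le (hnb j)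
        rw [← enorm_eq_nnnorm, Real.enorm_eq_ofReal hnn]
        apply ENNReal.ofReal_le_ofReal
        nlinarith [hnb j, Real.exp_pos (-(v * (1 - v) * t * ρ j))]
      calc (∫⁻ v in Ioc (0:ℝ) 1, ‖Real.exp (-(v * (1 - v) * t * ρ j)) * ‖b j‖ ^ 2‖₊)
          ≤ ∫⁻ _ in Ioc (0:ℝ) 1, ENNReal.ofReal (‖b j‖ ^ 2) := by
            apply setLIntegral_mono measurable_const hbd
        _ = ENNReal.ofReal (‖b j‖ ^ 2) := by
            rw [setLIntegral_const, Real.volume_Ioc]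
            simp
    have hswap : (∫ v in (0:ℝ)..1, ∑' j, Real.exp (-(v * (1 - v) * t * ρ j)) * ‖b j‖ ^ 2)
        = ∑' j, ∫ v in (0:ℝ)..1, Real.exp (-(v * (1 - v) * t * ρ j)) * ‖b j‖ ^ 2 := by
      rw [intervalIntegral.integral_of_le zero_le_one]
      rw [MeasureTheory.integral_tsum hmeas hfin]
      exact tsum_congr fun j => (intervalIntegral.integral_of_le zero_le_one).symm
    have hperj : ∀ j : ℕ,
        (∫ v in (0:ℝ)..1, Real.exp (-(v * (1 - v) * t * ρ j)) * ‖b j‖ ^ 2)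
          = (∑ k ∈ Finset.range (n+1),
              (((-1:ℝ)^k * B k / (Nat.factorial k)) * t ^ k) * (ρ j ^ k * ‖b j‖ ^ 2))
            + (-1:ℝ)^(n+1) * (‖b j‖ ^ 2 * I j t) := by
      intro j
      rw [intervalIntegral.integral_mul_const, hJ t ht j, add_mul, Finset.sum_mul]
      congr 1
      · apply Finset.sum_congr rfl
        intro k _
        rw [mul_pow]
        ring
      · ring
    rw [hswap]
    rw [tsum_congr hperj]
    rw [Summable.tsum_add (summable_sum (fun k hk =>
        ((hmomk k (Nat.lt_succ_iff.1 (Finset.mem_range.1 hk))).mul_left _)))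
      ((hIsum t ht).mul_left _)]
    rw [Summable.tsum_finsetSum (fun k hk => ((hmomk k (Nat.lt_succ_iff.1 (Finset.mem_range.1 hk))).mul_left _))]
    congr 1
    · apply Finset.sum_congr rfl
      intro k _
      rw [tsum_mul_left]
      simp only [hcdef, hMdef]
      ring
    · rw [tsum_mul_left]
  have habs : ∀ (t : ℝ), 0 ≤ t →
      |(∫ v in (0:ℝ)..1, ∑' j, Real.exp (-(v * (1 - v) * t * ρ j)) * ‖b j‖ ^ 2)
        - ∑ k ∈ Finset.range (n+1), c k * t ^ k| = G t := by
    intro t ht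
    rw [hF t ht]
    rw [add_sub_cancel_left]
    rw [abs_mul, abs_pow, abs_neg, abs_one, one_pow, one_mul]
    exact abs_of_nonneg (hGnonneg t ht)
  -- G t = o(t^n) as t → 0⁺
  have hGsmall : Tendsto (fun t : ℝ => G t / t ^ n) (nhdsWithin 0 (Ioi 0)) (nhds 0) := by
    have h0 : Tendsto (fun t : ℝ => ∑' j, (‖b j‖ ^ 2 * I j t) / t ^ n)
        (nhdsWithin 0 (Ioi 0)) (nhds (∑' (_ : ℕ), (0:ℝ))) := by
      apply tendsto_tsum_of_dominated_convergence
        (bound := fun j => (B n / (Nat.factorial n)) * (ρ j ^ n * ‖b j‖ ^ 2))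
      · exact (hmomk n le_rfl).mul_left _
      · intro j
        apply squeeze_zero'
          (g := fun t : ℝ => (‖b j‖ ^ 2 * (ρ j ^ (n+1) * B (n+1) / (Nat.factorial (n+1)))) * t)
        · filter_upwards [self_mem_nhdsWithin] with t ht
          have ht' : (0:ℝ) < t := ht
          exact div_nonneg (mul_nonneg (hnb j) (hInonneg t ht'.le j)) (pow_nonneg ht'.le n)
        · filter_upwards [self_mem_nhdsWithin] with t ht
          have ht' : (0:ℝ) < t := ht
          have h1 : ‖b j‖ ^ 2 * I j t / t ^ n
              ≤ ‖b j‖ ^ 2 * ((t * ρ j)^(n+1) / (Nat.factorial (n+1)) * B (n+1)) / t ^ n := by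
            gcongr
            · exact hIub t ht'.le j
          refine h1.trans (le_of_eq ?_)
          rw [mul_pow, pow_succ]
          field_simp
          ring
        · have : Tendsto (fun t : ℝ =>
              (‖b j‖ ^ 2 * (ρ j ^ (n+1) * B (n+1) / (Nat.factorial (n+1)))) * t)
              (nhdsWithin 0 (Ioi 0)) (nhds ((‖b j‖ ^ 2 * (ρ j ^ (n+1) * B (n+1) / (Nat.factorial (n+1)))) * 0)) :=
            (tendsto_id.const_mul _).mono_left nhdsWithin_le_nhds
          simpa using this
      · filter_upwards [self_mem_nhdsWithin] with t ht
        intro j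
        have ht' : (0:ℝ) < t := ht
        have hnn : 0 ≤ ‖b j‖ ^ 2 * I j t / t ^ n :=
          div_nonneg (mul_nonneg (hnb j) (hInonneg t ht'.le j)) (pow_nonneg ht'.le n)
        rw [Real.norm_eq_abs, abs_of_nonneg hnn]
        have h1 : ‖b j‖ ^ 2 * I j t / t ^ n
            ≤ ‖b j‖ ^ 2 * ((t * ρ j)^n / (Nat.factorial n) * B n) / t ^ n := by
          gcongr
          · exact hIub' t ht'.le j
        refine h1.trans (le_of_eq ?_)
        rw [mul_pow]
        field_simp
    rw [tsum_zero] at h0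
    apply h0.congr
    intro t
    exact tsum_div_const
  -- identification of the coefficients
  have had : ∀ k, k < n + 1 → a k = c k := by
    have htend : Tendsto (fun t : ℝ => (∑ k ∈ Finset.range (n+1), (a k - c k) * t ^ k) / t ^ n)
        (nhdsWithin 0 (Ioi 0)) (nhds 0) := by
      rw [tendsto_zero_iff_norm_tendsto_zero]
      apply squeeze_zero'
        (g := fun t : ℝ => G t / t ^ n + Cm * t)
      · exact Eventually.of_forall (fun t => norm_nonneg _)
      · filter_upwards [Ioc_mem_nhdsGT zero_lt_one] with t ht
        have ht' : (0:ℝ) < t := ht.1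
        have htn : (0:ℝ) < t ^ n := pow_pos ht' n
        have hsub : ∑ k ∈ Finset.range (n+1), (a k - c k) * t ^ k
            = ((∫ v in (0:ℝ)..1, ∑' j, Real.exp (-(v * (1 - v) * t * ρ j)) * ‖b j‖ ^ 2)
                - ∑ k ∈ Finset.range (n+1), c k * t ^ k)
              - ((∫ v in (0:ℝ)..1, ∑' j, Real.exp (-(v * (1 - v) * t * ρ j)) * ‖b j‖ ^ 2)
                - ∑ k ∈ Finset.range (n+1), a k * t ^ k) := by
          rw [sub_sub_sub_cancel_left, ← Finset.sum_sub_distrib]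
          exact Finset.sum_congr rfl fun k _ => by ring
        rw [Real.norm_eq_abs, abs_div, abs_of_pos htn, hsub]
        have h2 : |((∫ v in (0:ℝ)..1, ∑' j, Real.exp (-(v * (1 - v) * t * ρ j)) * ‖b j‖ ^ 2)
                - ∑ k ∈ Finset.range (n+1), c k * t ^ k)
              - ((∫ v in (0:ℝ)..1, ∑' j, Real.exp (-(v * (1 - v) * t * ρ j)) * ‖b j‖ ^ 2)
                - ∑ k ∈ Finset.range (n+1), a k * t ^ k)|
            ≤ G t + Cm * t ^ (n+1) := by
          calc _ ≤ |(∫ v in (0:ℝ)..1, ∑' j, Real.exp (-(v * (1 - v) * t * ρ j)) * ‖b j‖ ^ 2)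
                - ∑ k ∈ Finset.range (n+1), c k * t ^ k|
              + |(∫ v in (0:ℝ)..1, ∑' j, Real.exp (-(v * (1 - v) * t * ρ j)) * ‖b j‖ ^ 2)
                - ∑ k ∈ Finset.range (n+1), a k * t ^ k| := abs_sub _ _
            _ ≤ G t + Cm * t ^ (n+1) := by
                rw [habs t ht'.le]
                exact add_le_add le_rfl (h t ht)
        calc _ ≤ (G t + Cm * t ^ (n+1)) / t ^ n := by
              exact (div_le_div_iff_of_pos_right htn).2 h2
          _ = G t / t ^ n + Cm * t := by
              rw [pow_succ]
              field_simp
      · have h2 : Tendsto (fun t : ℝ => Cm * t) (nhdsWithin 0 (Ioi 0)) (nhds (Cm * 0)) :=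
          (tendsto_id.const_mul _).mono_left nhdsWithin_le_nhds
        rw [mul_zero] at h2
        simpa using hGsmall.add h2
    intro k hk
    have h3 : a k - c k = 0 := poly_zero n (fun k => a k - c k) htend k hk
    linarith
  -- with the coefficients identified, G t ≤ Cm t^m
  have hGle : ∀ t ∈ Ioc (0:ℝ) 1, G t ≤ Cm * t ^ (n+1) := by
    intro t ht
    have hsame : ∑ k ∈ Finset.range (n+1), c k * t ^ k
        = ∑ k ∈ Finset.range (n+1), a k * t ^ k :=
      Finset.sum_congr rfl fun k hk => by rw [had k (Finset.mem_range.1 hk)]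
    rw [← habs t ht.1.le, hsame]
    exact h t ht
  -- partial sums of the m-th moment are bounded
  have hfacB : (0:ℝ) < (Nat.factorial (n+1) : ℝ) := hfac (n+1)
  have key : ∀ N : ℕ, ∑ j ∈ Finset.range N, ρ j ^ (n+1) * ‖b j‖ ^ 2
      ≤ (Nat.factorial (n+1) : ℝ) * Cm / B (n+1) := by
    intro N
    have hlim : Tendsto (fun t : ℝ => ∑ j ∈ Finset.range N, ‖b j‖ ^ 2 * I j t / t ^ (n+1))
        (nhdsWithin 0 (Ioi 0))
        (nhds (∑ j ∈ Finset.range N, ‖b j‖ ^ 2 * (ρ j ^ (n+1) * B (n+1) / (Nat.factorial (n+1))))) := by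
      apply tendsto_finset_sum
      intro j _
      set K : ℝ := ‖b j‖ ^ 2 * (ρ j ^ (n+1) * B (n+1) / (Nat.factorial (n+1))) with hKdef
      have hKnn : 0 ≤ K := by
        have h1 := hnb j
        have h2 := pow_nonneg (hρ j) (n+1)
        have h3 := (hBpos (n+1)).le
        positivity
      apply tendsto_of_tendsto_of_tendsto_of_le_of_le'
        (g := fun t : ℝ => K * Real.exp (-(t * ρ j))) (h := fun _ : ℝ => K)
      · have hc : Tendsto (fun t : ℝ => K * Real.exp (-(t * ρ j))) (nhds 0)
            (nhds (K * Real.exp (-(0 * ρ j)))) := by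
          apply Continuous.tendsto
          fun_prop
        simp only [zero_mul, neg_zero, Real.exp_zero, mul_one] at hc
        exact hc.mono_left nhdsWithin_le_nhds
      · exact tendsto_const_nhds
      · filter_upwards [self_mem_nhdsWithin] with t ht
        have ht' : (0:ℝ) < t := ht
        have h1 := hIlb t ht'.le j
        rw [le_div_iff₀ (pow_pos ht' (n+1))]
        calc K * Real.exp (-(t * ρ j)) * t ^ (n+1)
            = ‖b j‖ ^ 2 * ((t * ρ j) ^ (n+1) / (Nat.factorial (n+1)) * Real.exp (-(t * ρ j)) * B (n+1)) := by
              rw [hKdef, mul_pow]; ring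
          _ ≤ ‖b j‖ ^ 2 * I j t := mul_le_mul_of_nonneg_left h1 (hnb j)
      · filter_upwards [self_mem_nhdsWithin] with t ht
        have ht' : (0:ℝ) < t := ht
        have h1 := hIub t ht'.le j
        rw [div_le_iff₀ (pow_pos ht' (n+1))]
        calc ‖b j‖ ^ 2 * I j t
            ≤ ‖b j‖ ^ 2 * ((t * ρ j) ^ (n+1) / (Nat.factorial (n+1)) * B (n+1)) :=
              mul_le_mul_of_nonneg_left h1 (hnb j)
          _ = K * t ^ (n+1) := by rw [hKdef, mul_pow]; ring
    have hev : ∀ᶠ t in nhdsWithin (0:ℝ) (Ioi 0),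
        ∑ j ∈ Finset.range N, ‖b j‖ ^ 2 * I j t / t ^ (n+1) ≤ Cm := by
      filter_upwards [Ioc_mem_nhdsGT zero_lt_one] with t ht
      have ht' : (0:ℝ) < t := ht.1
      have hsum_le : ∑ j ∈ Finset.range N, ‖b j‖ ^ 2 * I j t ≤ G t := by
        apply Summable.sum_le_tsum (Finset.range N)
          (fun j _ => mul_nonneg (hnb j) (hInonneg t ht'.le j)) (hIsum t ht'.le)
      rw [← Finset.sum_div, div_le_iff₀ (pow_pos ht' (n+1))]
      calc ∑ j ∈ Finset.range N, ‖b j‖ ^ 2 * I j t ≤ G t := hsum_le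
        _ ≤ Cm * t ^ (n+1) := hGle t ht
    have hle : ∑ j ∈ Finset.range N, ‖b j‖ ^ 2 * (ρ j ^ (n+1) * B (n+1) / (Nat.factorial (n+1))) ≤ Cm :=
      le_of_tendsto hlim hev
    have heq : ∑ j ∈ Finset.range N, ‖b j‖ ^ 2 * (ρ j ^ (n+1) * B (n+1) / (Nat.factorial (n+1)))
        = (B (n+1) / (Nat.factorial (n+1))) * ∑ j ∈ Finset.range N, ρ j ^ (n+1) * ‖b j‖ ^ 2 := by
      rw [Finset.mul_sum]
      exact Finset.sum_congr rfl fun j _ => by ring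
    rw [heq] at hle
    rw [le_div_iff₀ (hBpos (n+1))]
    have h2 := mul_le_mul_of_nonneg_left hle hfacB.le
    calc (∑ j ∈ Finset.range N, ρ j ^ (n+1) * ‖b j‖ ^ 2) * B (n+1)
        = (Nat.factorial (n+1) : ℝ) * ((B (n+1) / (Nat.factorial (n+1))) * ∑ j ∈ Finset.range N, ρ j ^ (n+1) * ‖b j‖ ^ 2) := by
          field_simp
      _ ≤ (Nat.factorial (n+1) : ℝ) * Cm := h2
  -- conclusion
  have hBmeq : (∫ v in (0:ℝ)..1, v ^ (n+1) * (1 - v) ^ (n+1)) = B (n+1) := by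
    apply intervalIntegral.integral_congr
    intro v _
    exact (mul_pow v (1 - v) (n+1)).symm
  rw [hBmeq]
  have hnn : ∀ j, 0 ≤ ρ j ^ (n+1) * ‖b j‖ ^ 2 :=
    fun j => mul_nonneg (pow_nonneg (hρ j) _) (hnb j)
  exact ⟨summable_of_sum_range_le hnn key, Real.tsum_le_of_sum_range_le hnn key⟩
end

section
/- If (ρ_j) are nonnegative reals and (b_j) a complex sequence with Σ_j (1+ρ_j^m)|b_j|^2 < ∞, then the function t ↦ ∫_0^1 Σ_j e^{-v(1-v)tρ_j} |b_j|^2 dv admits the expansion a_0 + a_1 t + ... + a_m t^m + ε(t) t^m on (0,1], where a_k = ((-1)^k/k!)(∫_0^1 v^k(1-v)^k dv) Σ_j ρ_j^k |b_j|^2 and ε(t) → 0 as t → 0⁺. -/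
open Set Filter

lemma hasDerivAt_P (n : ℕ) (u : ℝ) :
    HasDerivAt (fun s => ∑ k ∈ Finset.range (n+1), (-1:ℝ)^k * s^k / k.factorial)
      (-(∑ k ∈ Finset.range n, (-1:ℝ)^k * u^k / k.factorial)) u := by
  have h : ∀ k : ℕ, HasDerivAt (fun s : ℝ => (-1:ℝ)^k * s^k / k.factorial)
      ((-1:ℝ)^k * (k * u^(k-1)) / k.factorial) u := by
    intro k
    exact ((hasDerivAt_pow k u).const_mul ((-1:ℝ)^k)).div_const (k.factorial)
  have hsum := HasDerivAt.fun_sum (fun k (_ : k ∈ Finset.range (n+1)) => h k)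
  convert hsum using 1
  case e'_4 => rfl
  case e'_5 => rfl
  rw [Finset.sum_range_succ', ← Finset.sum_neg_distrib]
  simp only [Nat.add_sub_cancel, Nat.cast_add, Nat.cast_one, pow_succ, Nat.cast_zero,
    zero_mul, mul_zero, zero_div, add_zero]
  apply Finset.sum_congr rfl
  intro i _
  have hfac : ((i+1).factorial : ℝ) = (i+1) * i.factorial := by
    push_cast [Nat.factorial_succ]; ring
  rw [hfac]
  have h1 : ((i:ℝ)+1) ≠ 0 := by positivity
  have h2 : (i.factorial : ℝ) ≠ 0 := by positivity
  field_simp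

lemma exp_taylor_bound (n : ℕ) : ∀ s : ℝ, 0 ≤ s →
    |Real.exp (-s) - ∑ k ∈ Finset.range n, (-1:ℝ)^k * s^k / k.factorial|
      ≤ s^n / n.factorial := by
  induction n with
  | zero =>
    intro s hs
    simp only [Finset.range_zero, Finset.sum_empty, sub_zero, pow_zero,
      Nat.factorial_zero, Nat.cast_one, div_one]
    rw [abs_of_nonneg (Real.exp_pos _).le]
    exact Real.exp_le_one_iff.2 (by linarith)
  | succ n ih =>
    intro s hs
    set f : ℝ → ℝ := fun u => Real.exp (-u) - ∑ k ∈ Finset.range (n+1), (-1:ℝ)^k * u^k / k.factorial with hf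
    set g : ℝ → ℝ := fun u => Real.exp (-u) - ∑ k ∈ Finset.range n, (-1:ℝ)^k * u^k / k.factorial with hg
    have hderiv : ∀ u : ℝ, HasDerivAt f (-(g u)) u := by
      intro u
      have h1 : HasDerivAt (fun u : ℝ => Real.exp (-u)) (-Real.exp (-u)) u := by
        simpa using (hasDerivAt_id u).neg.exp
      have := h1.sub (hasDerivAt_P n u)
      convert this using 1
      case e'_4 => rfl
      case e'_5 => rfl
      case e'_8 => rfl
      simp [hg]; ring
    have hgc : Continuous g := by
      apply Continuous.sub
      · exact Real.continuous_exp.comp continuous_neg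
      · exact continuous_finset_sum _ (fun k _ => by fun_prop)
    have hftc : ∫ u in (0:ℝ)..s, -(g u) = f s - f 0 :=
      intervalIntegral.integral_eq_sub_of_hasDerivAt (fun u _ => hderiv u)
        (hgc.neg.intervalIntegrable 0 s)
    have hf0 : f 0 = 0 := by
      simp only [hf, neg_zero, Real.exp_zero, Finset.sum_range_succ']
      simp
    have hfs : f s = -∫ u in (0:ℝ)..s, g u := by
      rw [← intervalIntegral.integral_neg, hftc, hf0, sub_zero]
    have hgoal : |f s| ≤ s^(n+1) / (n+1).factorial → |Real.exp (-s) - ∑ k ∈ Finset.range (n+1), (-1:ℝ)^k * s^k / k.factorial| ≤ s^(n+1) / (n+1).factorial := fun h => h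
    apply hgoal
    rw [hfs, abs_neg]
    have h1 : |∫ u in (0:ℝ)..s, g u| ≤ ∫ u in (0:ℝ)..s, |g u| :=
      intervalIntegral.abs_integral_le_integral_abs hs
    have h2 : (∫ u in (0:ℝ)..s, |g u|) ≤ ∫ u in (0:ℝ)..s, u^n / n.factorial := by
      apply intervalIntegral.integral_mono_on hs
        (hgc.abs.intervalIntegrable 0 s)
        ((continuous_pow n).div_const _ |>.intervalIntegrable 0 s)
      intro u hu
      exact ih u hu.1
    have h3 : (∫ u in (0:ℝ)..s, u^n / n.factorial) = s^(n+1) / (n+1).factorial := by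
      rw [intervalIntegral.integral_div, integral_pow]
      have : ((n+1).factorial : ℝ) = (n+1) * n.factorial := by
        push_cast [Nat.factorial_succ]; ring
      rw [this]
      field_simp
      simp
    calc |∫ u in (0:ℝ)..s, g u| ≤ _ := h1
      _ ≤ _ := h2
      _ = _ := h3

lemma exp_taylor_bound' (m : ℕ) (s : ℝ) (hs : 0 ≤ s) :
    |Real.exp (-s) - ∑ k ∈ Finset.range (m+1), (-1:ℝ)^k * s^k / k.factorial|
      ≤ min (2 * s^m / m.factorial) (s^(m+1) / (m+1).factorial) := by
  refine le_min ?_ (exp_taylor_bound (m+1) s hs)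
  have h1 := exp_taylor_bound m s hs
  have h2 : Real.exp (-s) - ∑ k ∈ Finset.range (m+1), (-1:ℝ)^k * s^k / k.factorial
      = (Real.exp (-s) - ∑ k ∈ Finset.range m, (-1:ℝ)^k * s^k / k.factorial)
        - (-1:ℝ)^m * s^m / m.factorial := by
    rw [Finset.sum_range_succ]; ring
  rw [h2]
  have h3 : |(-1:ℝ)^m * s^m / m.factorial| = s^m / m.factorial := by
    rw [abs_div, abs_mul, abs_pow, abs_pow, abs_neg, abs_one, one_pow, one_mul,
      abs_of_nonneg hs, abs_of_nonneg (by positivity : (0:ℝ) ≤ (m.factorial:ℝ))]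
  calc |(Real.exp (-s) - ∑ k ∈ Finset.range m, (-1:ℝ)^k * s^k / k.factorial)
        - (-1:ℝ)^m * s^m / m.factorial|
      ≤ |Real.exp (-s) - ∑ k ∈ Finset.range m, (-1:ℝ)^k * s^k / k.factorial|
        + |(-1:ℝ)^m * s^m / m.factorial| := abs_sub _ _
    _ ≤ s^m / m.factorial + s^m / m.factorial := by rw [h3]; exact add_le_add_left h1 _
    _ = 2 * s^m / m.factorial := by ring

/-- Direct half of the spectral reformulation: finiteness of
`∑ (1+ρ_j^m)|b_j|²` yields an `m`-th order expansion of
`t ↦ ∫_0^1 ∑_j e^{-v(1-v)tρ_j}|b_j|² dv` with the explicit coefficients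
`a_k = ((-1)^k/k!) (∫_0^1 v^k(1-v)^k dv) ∑_j ρ_j^k |b_j|²` and `ε(t) → 0`. -/
theorem stmt_4 (ρ : ℕ → ℝ) (hρ : ∀ j, 0 ≤ ρ j) (b : ℕ → ℂ) (m : ℕ)
    (hb : Summable fun j => (1 + ρ j ^ m) * ‖b j‖ ^ 2) :
    ∃ ε : ℝ → ℝ,
      Tendsto ε (nhdsWithin 0 (Ioi 0)) (nhds 0) ∧
      ∀ t ∈ Ioc (0:ℝ) 1,
        (∫ v in (0:ℝ)..1, ∑' j, Real.exp (-(v * (1 - v) * t * ρ j)) * ‖b j‖ ^ 2)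
          = (∑ k ∈ Finset.range (m + 1),
              (((-1 : ℝ) ^ k / (Nat.factorial k))
                  * (∫ v in (0:ℝ)..1, v ^ k * (1 - v) ^ k)
                  * ∑' j, ρ j ^ k * ‖b j‖ ^ 2) * t ^ k)
            + ε t * t ^ m := by
  classical
  have hc0 : ∀ j, (0:ℝ) ≤ ‖b j‖ ^ 2 := fun j => by positivity
  have hsumc : Summable (fun j => ‖b j‖ ^ 2) := by
    apply hb.of_nonneg_of_le hc0
    intro j
    nlinarith [hc0 j, pow_nonneg (hρ j) m]
  have hsumk : ∀ k, k ≤ m → Summable (fun j => ρ j ^ k * ‖b j‖ ^ 2) := by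
    intro k hk
    apply hb.of_nonneg_of_le (fun j => mul_nonneg (pow_nonneg (hρ j) k) (hc0 j))
    intro j
    have hle : ρ j ^ k ≤ 1 + ρ j ^ m := by
      rcases le_total (ρ j) 1 with h | h
      · have h1 : ρ j ^ k ≤ 1 := pow_le_one₀ (hρ j) h
        nlinarith [pow_nonneg (hρ j) m]
      · have h1 : ρ j ^ k ≤ ρ j ^ m := pow_le_pow_right₀ h hk
        linarith
    exact mul_le_mul_of_nonneg_right hle (hc0 j)
  have hsumm : Summable (fun j => ρ j ^ m * ‖b j‖ ^ 2) := hsumk m le_rfl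
  -- the dominating sequence
  set B : ℝ → ℕ → ℝ := fun t j =>
    min (2 * ρ j ^ m / (Nat.factorial m : ℝ)) (t * ρ j ^ (m+1) / (Nat.factorial (m+1) : ℝ)) * ‖b j‖ ^ 2
    with hBdef
  have hB0 : ∀ t, 0 ≤ t → ∀ j, 0 ≤ B t j := by
    intro t ht j
    apply mul_nonneg _ (hc0 j)
    have h1 := pow_nonneg (hρ j) m
    have h2 := pow_nonneg (hρ j) (m+1)
    apply le_min
    · positivity
    · exact div_nonneg (mul_nonneg ht h2) (by positivity)
  have hBle : ∀ t j, B t j ≤ 2 / (Nat.factorial m : ℝ) * (ρ j ^ m * ‖b j‖ ^ 2) := by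
    intro t j
    have : min (2 * ρ j ^ m / (Nat.factorial m : ℝ)) (t * ρ j ^ (m+1) / (Nat.factorial (m+1) : ℝ))
        ≤ 2 * ρ j ^ m / (Nat.factorial m : ℝ) := min_le_left _ _
    calc B t j ≤ 2 * ρ j ^ m / (Nat.factorial m : ℝ) * ‖b j‖ ^ 2 :=
          mul_le_mul_of_nonneg_right this (hc0 j)
      _ = 2 / (Nat.factorial m : ℝ) * (ρ j ^ m * ‖b j‖ ^ 2) := by ring
  have hsumB : ∀ t, 0 ≤ t → Summable (B t) := by
    intro t ht
    exact (hsumm.mul_left ((2:ℝ) / (Nat.factorial m : ℝ))).of_nonneg_of_le (hB0 t ht) (hBle t)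
  set δ : ℝ → ℝ := fun t => ∑' j, B t j with hδdef
  -- δ tends to 0
  have hδ0 : Tendsto δ (nhdsWithin 0 (Ioi 0)) (nhds 0) := by
    have main : Tendsto δ (nhdsWithin 0 (Ioi 0)) (nhds (∑' _ : ℕ, (0:ℝ))) := by
      apply tendsto_tsum_of_dominated_convergence
        (bound := fun j => 2 / (Nat.factorial m : ℝ) * (ρ j ^ m * ‖b j‖ ^ 2))
        (hsumm.mul_left _)
      · intro j
        have hcont : Tendsto (fun t : ℝ =>
            min (2 * ρ j ^ m / (Nat.factorial m : ℝ)) (t * ρ j ^ (m+1) / (Nat.factorial (m+1) : ℝ)) * ‖b j‖ ^ 2)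
            (nhds 0) (nhds (min (2 * ρ j ^ m / (Nat.factorial m : ℝ))
              ((0:ℝ) * ρ j ^ (m+1) / (Nat.factorial (m+1) : ℝ)) * ‖b j‖ ^ 2)) := by
          apply Tendsto.mul_const
          apply Tendsto.min tendsto_const_nhds
          apply Tendsto.div_const
          exact (tendsto_id.mul_const _)
        have hval : min (2 * ρ j ^ m / (Nat.factorial m : ℝ))
              ((0:ℝ) * ρ j ^ (m+1) / (Nat.factorial (m+1) : ℝ)) * ‖b j‖ ^ 2 = 0 := by
          have h1 := pow_nonneg (hρ j) m
          rw [zero_mul, zero_div]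
          rw [min_eq_right (by positivity)]
          ring
        rw [hval] at hcont
        exact hcont.mono_left nhdsWithin_le_nhds
      · filter_upwards [self_mem_nhdsWithin] with t ht j
        rw [Real.norm_eq_abs, abs_of_nonneg (hB0 t (le_of_lt ht) j)]
        exact hBle t j
    simpa using main
  -- key estimate
  have key : ∀ t ∈ Ioc (0:ℝ) 1,
      |(∫ v in (0:ℝ)..1, ∑' j, Real.exp (-(v * (1 - v) * t * ρ j)) * ‖b j‖ ^ 2)
        - ∑ k ∈ Finset.range (m + 1),
            (((-1 : ℝ) ^ k / (Nat.factorial k))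
                * (∫ v in (0:ℝ)..1, v ^ k * (1 - v) ^ k)
                * ∑' j, ρ j ^ k * ‖b j‖ ^ 2) * t ^ k|
      ≤ t ^ m * δ t := by
    intro t ht
    obtain ⟨ht0, ht1⟩ := ht
    set G : ℝ → ℝ := fun v => ∑ k ∈ Finset.range (m+1),
      ((-1:ℝ)^k / (Nat.factorial k : ℝ)) * ((v*(1-v))^k * t^k) * (∑' j, ρ j ^ k * ‖b j‖ ^ 2)
      with hGdef
    have hGcont : Continuous G := by
      apply continuous_finset_sum
      intro k _
      fun_prop
    have hGint : (∫ v in (0:ℝ)..1, G v)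
        = ∑ k ∈ Finset.range (m + 1),
            (((-1 : ℝ) ^ k / (Nat.factorial k))
                * (∫ v in (0:ℝ)..1, v ^ k * (1 - v) ^ k)
                * ∑' j, ρ j ^ k * ‖b j‖ ^ 2) * t ^ k := by
      rw [hGdef]
      rw [intervalIntegral.integral_finset_sum
        (fun k _ => Continuous.intervalIntegrable (by fun_prop) 0 1)]
      apply Finset.sum_congr rfl
      intro k _
      have hrw : ∀ v : ℝ, ((-1:ℝ)^k / (Nat.factorial k : ℝ)) * ((v*(1-v))^k * t^k) * (∑' j, ρ j ^ k * ‖b j‖ ^ 2)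
          = (((-1:ℝ)^k / (Nat.factorial k : ℝ)) * t^k * (∑' j, ρ j ^ k * ‖b j‖ ^ 2)) * (v^k * (1-v)^k) := by
        intro v; rw [mul_pow]; ring
      simp_rw [hrw]
      rw [intervalIntegral.integral_const_mul]
      ring
    have hEcont : ContinuousOn (fun v : ℝ => ∑' j, Real.exp (-(v * (1 - v) * t * ρ j)) * ‖b j‖ ^ 2) (Icc 0 1) := by
      apply continuousOn_tsum (u := fun j => ‖b j‖ ^ 2)
        (fun j => Continuous.continuousOn (by fun_prop)) hsumc
      intro j v hv
      rw [Real.norm_eq_abs, abs_mul, abs_of_nonneg (Real.exp_pos _).le, abs_of_nonneg (hc0 j)]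
      have hs0 : 0 ≤ v * (1 - v) * t * ρ j :=
        mul_nonneg (mul_nonneg (mul_nonneg hv.1 (by linarith [hv.2])) ht0.le) (hρ j)
      apply mul_le_of_le_one_left (hc0 j)
      exact Real.exp_le_one_iff.2 (by linarith)
    have hEint : IntervalIntegrable (fun v : ℝ => ∑' j, Real.exp (-(v * (1 - v) * t * ρ j)) * ‖b j‖ ^ 2) MeasureTheory.volume 0 1 := by
      apply ContinuousOn.intervalIntegrable
      rwa [uIcc_of_le (by norm_num : (0:ℝ) ≤ 1)]
    have hGint' : IntervalIntegrable G MeasureTheory.volume 0 1 := hGcont.intervalIntegrable 0 1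
    have hsplit : (∫ v in (0:ℝ)..1, ∑' j, Real.exp (-(v * (1 - v) * t * ρ j)) * ‖b j‖ ^ 2)
        - ∑ k ∈ Finset.range (m + 1),
            (((-1 : ℝ) ^ k / (Nat.factorial k))
                * (∫ v in (0:ℝ)..1, v ^ k * (1 - v) ^ k)
                * ∑' j, ρ j ^ k * ‖b j‖ ^ 2) * t ^ k
        = ∫ v in (0:ℝ)..1, ((∑' j, Real.exp (-(v * (1 - v) * t * ρ j)) * ‖b j‖ ^ 2) - G v) := by
      rw [intervalIntegral.integral_sub hEint hGint', hGint]
    rw [hsplit]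
    have hbound : ∀ v ∈ Ioc (0:ℝ) 1,
        ‖(∑' j, Real.exp (-(v * (1 - v) * t * ρ j)) * ‖b j‖ ^ 2) - G v‖ ≤ t ^ m * δ t := by
      intro v hv
      have hv0 : (0:ℝ) ≤ v := hv.1.le
      have hv1 : v ≤ 1 := hv.2
      have hw0 : 0 ≤ v * (1 - v) := mul_nonneg hv0 (by linarith)
      have hw1 : v * (1 - v) ≤ 1 := by nlinarith
      have hs0 : ∀ j, 0 ≤ v * (1 - v) * t * ρ j := fun j =>
        mul_nonneg (mul_nonneg hw0 ht0.le) (hρ j)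
      have hsle : ∀ j, v * (1 - v) * t * ρ j ≤ t * ρ j := by
        intro j
        have h := mul_nonneg ht0.le (hρ j)
        calc v * (1 - v) * t * ρ j = (v * (1 - v)) * (t * ρ j) := by ring
          _ ≤ 1 * (t * ρ j) := mul_le_mul_of_nonneg_right hw1 h
          _ = t * ρ j := one_mul _
      have hsumexp : Summable (fun j => Real.exp (-(v * (1 - v) * t * ρ j)) * ‖b j‖ ^ 2) := by
        apply hsumc.of_nonneg_of_le (fun j => mul_nonneg (Real.exp_pos _).le (hc0 j))
        intro j
        apply mul_le_of_le_one_left (hc0 j)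
        exact Real.exp_le_one_iff.2 (by linarith [hs0 j])
      have hform : ∀ j, (∑ k ∈ Finset.range (m+1), (-1:ℝ)^k * (v * (1 - v) * t * ρ j)^k / (Nat.factorial k : ℝ)) * ‖b j‖ ^ 2
          = ∑ k ∈ Finset.range (m+1), ((-1:ℝ)^k * (v * (1 - v) * t)^k / (Nat.factorial k : ℝ)) * (ρ j ^ k * ‖b j‖ ^ 2) := by
        intro j
        rw [Finset.sum_mul]
        apply Finset.sum_congr rfl
        intro k _
        rw [mul_pow]
        ring
      have hsummand : ∀ k ∈ Finset.range (m+1), Summable (fun j => ((-1:ℝ)^k * (v * (1 - v) * t)^k / (Nat.factorial k : ℝ)) * (ρ j ^ k * ‖b j‖ ^ 2)) :=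
        fun k hk => (hsumk k (Finset.mem_range_succ_iff.1 hk)).mul_left _
      have hsumP : Summable (fun j => (∑ k ∈ Finset.range (m+1), (-1:ℝ)^k * (v * (1 - v) * t * ρ j)^k / (Nat.factorial k : ℝ)) * ‖b j‖ ^ 2) := by
        rw [summable_congr hform]
        exact summable_sum hsummand
      have hGv : G v = ∑' j, (∑ k ∈ Finset.range (m+1), (-1:ℝ)^k * (v * (1 - v) * t * ρ j)^k / (Nat.factorial k : ℝ)) * ‖b j‖ ^ 2 := by
        rw [tsum_congr hform, Summable.tsum_finsetSum hsummand, hGdef]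
        apply Finset.sum_congr rfl
        intro k _
        rw [tsum_mul_left]
        simp only [mul_pow]
        ring
      rw [hGv, ← Summable.tsum_sub hsumexp hsumP]
      have hcomb : (∑' j, (Real.exp (-(v * (1 - v) * t * ρ j)) * ‖b j‖ ^ 2
            - (∑ k ∈ Finset.range (m+1), (-1:ℝ)^k * (v * (1 - v) * t * ρ j)^k / (Nat.factorial k : ℝ)) * ‖b j‖ ^ 2))
          = ∑' j, (Real.exp (-(v * (1 - v) * t * ρ j))
            - ∑ k ∈ Finset.range (m+1), (-1:ℝ)^k * (v * (1 - v) * t * ρ j)^k / (Nat.factorial k : ℝ)) * ‖b j‖ ^ 2 :=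
        tsum_congr fun j => by ring
      rw [hcomb]
      have hterm : ∀ j, |Real.exp (-(v * (1 - v) * t * ρ j))
            - ∑ k ∈ Finset.range (m+1), (-1:ℝ)^k * (v * (1 - v) * t * ρ j)^k / (Nat.factorial k : ℝ)| * ‖b j‖ ^ 2
          ≤ t ^ m * B t j := by
        intro j
        have h1 := exp_taylor_bound' m (v * (1 - v) * t * ρ j) (hs0 j)
        have hp1 : (v * (1 - v) * t * ρ j)^m ≤ (t * ρ j)^m := pow_le_pow_left₀ (hs0 j) (hsle j) m
        have hp2 : (v * (1 - v) * t * ρ j)^(m+1) ≤ (t * ρ j)^(m+1) := pow_le_pow_left₀ (hs0 j) (hsle j) (m+1)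
        have hf1 : (0:ℝ) < (Nat.factorial m : ℝ) := by positivity
        have hf2 : (0:ℝ) < (Nat.factorial (m+1) : ℝ) := by positivity
        have h2 : min (2 * (v * (1 - v) * t * ρ j)^m / (Nat.factorial m : ℝ)) ((v * (1 - v) * t * ρ j)^(m+1) / (Nat.factorial (m+1) : ℝ))
            ≤ min (2 * (t * ρ j)^m / (Nat.factorial m : ℝ)) ((t * ρ j)^(m+1) / (Nat.factorial (m+1) : ℝ)) := by
          apply min_le_min
          · apply div_le_div_of_nonneg_right ?_ hf1.le
            linarith
          · exact div_le_div_of_nonneg_right hp2 hf2.le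
        have h3 : min (2 * (t * ρ j)^m / (Nat.factorial m : ℝ)) ((t * ρ j)^(m+1) / (Nat.factorial (m+1) : ℝ))
            = t ^ m * min (2 * ρ j ^ m / (Nat.factorial m : ℝ)) (t * ρ j ^ (m+1) / (Nat.factorial (m+1) : ℝ)) := by
          rw [mul_min_of_nonneg _ _ (pow_nonneg ht0.le m)]
          congr 1
          · rw [mul_pow]; ring
          · rw [mul_pow, pow_succ]; ring
        calc |Real.exp (-(v * (1 - v) * t * ρ j))
              - ∑ k ∈ Finset.range (m+1), (-1:ℝ)^k * (v * (1 - v) * t * ρ j)^k / (Nat.factorial k : ℝ)| * ‖b j‖ ^ 2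
            ≤ (t ^ m * min (2 * ρ j ^ m / (Nat.factorial m : ℝ)) (t * ρ j ^ (m+1) / (Nat.factorial (m+1) : ℝ))) * ‖b j‖ ^ 2 :=
              mul_le_mul_of_nonneg_right (h1.trans (h2.trans_eq h3)) (hc0 j)
          _ = t ^ m * B t j := by rw [hBdef]; ring
      have hsumRabs : Summable (fun j => |Real.exp (-(v * (1 - v) * t * ρ j))
            - ∑ k ∈ Finset.range (m+1), (-1:ℝ)^k * (v * (1 - v) * t * ρ j)^k / (Nat.factorial k : ℝ)| * ‖b j‖ ^ 2) :=
        ((hsumB t ht0.le).mul_left (t^m)).of_nonneg_of_le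
          (fun j => mul_nonneg (abs_nonneg _) (hc0 j)) hterm
      calc ‖∑' j, (Real.exp (-(v * (1 - v) * t * ρ j))
            - ∑ k ∈ Finset.range (m+1), (-1:ℝ)^k * (v * (1 - v) * t * ρ j)^k / (Nat.factorial k : ℝ)) * ‖b j‖ ^ 2‖
          ≤ ∑' j, ‖(Real.exp (-(v * (1 - v) * t * ρ j))
            - ∑ k ∈ Finset.range (m+1), (-1:ℝ)^k * (v * (1 - v) * t * ρ j)^k / (Nat.factorial k : ℝ)) * ‖b j‖ ^ 2‖ := by
            apply norm_tsum_le_tsum_norm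
            apply (summable_congr ?_).2 hsumRabs
            intro j
            rw [Real.norm_eq_abs, abs_mul, abs_of_nonneg (hc0 j)]
        _ ≤ ∑' j, t ^ m * B t j := by
            apply Summable.tsum_le_tsum ?_ ?_ ((hsumB t ht0.le).mul_left _)
            · intro j
              rw [Real.norm_eq_abs, abs_mul, abs_of_nonneg (hc0 j)]
              exact hterm j
            · apply (summable_congr ?_).2 hsumRabs
              intro j
              rw [Real.norm_eq_abs, abs_mul, abs_of_nonneg (hc0 j)]
        _ = t ^ m * δ t := by rw [tsum_mul_left]
    have hnorm := intervalIntegral.norm_integral_le_of_norm_le_const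
      (C := t ^ m * δ t) (f := fun v => (∑' j, Real.exp (-(v * (1 - v) * t * ρ j)) * ‖b j‖ ^ 2) - G v)
      (a := 0) (b := 1) ?_
    · rw [Real.norm_eq_abs] at hnorm
      simpa using hnorm
    · intro x hx
      apply hbound
      simpa using hx
  -- conclude
  refine ⟨fun t => ((∫ v in (0:ℝ)..1, ∑' j, Real.exp (-(v * (1 - v) * t * ρ j)) * ‖b j‖ ^ 2)
      - ∑ k ∈ Finset.range (m + 1),
          (((-1 : ℝ) ^ k / (Nat.factorial k))
              * (∫ v in (0:ℝ)..1, v ^ k * (1 - v) ^ k)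
              * ∑' j, ρ j ^ k * ‖b j‖ ^ 2) * t ^ k) / t ^ m, ?_, ?_⟩
  · apply squeeze_zero_norm' _ hδ0
    filter_upwards [Ioc_mem_nhdsGT_of_mem (by constructor <;> norm_num : (0:ℝ) ∈ Ico (0:ℝ) 1)] with t ht
    have h := key t ht
    rw [Real.norm_eq_abs, abs_div, abs_of_nonneg (pow_nonneg ht.1.le m), div_le_iff₀ (pow_pos ht.1 m)]
    linarith
  · intro t ht
    have hne : t ^ m ≠ 0 := pow_ne_zero m (ne_of_gt ht.1)
    rw [div_mul_cancel₀ _ hne]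
    ring
end

section
/- For each k ≥ 2 there is a constant C(k) such that the following holds: for r = (r_1,...,r_k) in the open simplex {r_j > 0, Σ r_j = 1}, define the quadratic form Q_r(u) on ℝ^{n(k−1)}, u = (u_2,...,u_k), by Q_r(u) = r_k^{-1}|u_k|² + r_{k−1}^{-1}|u_k−u_{k−1}|² + ... + r_2^{-1}|u_3−u_2|² + r_1^{-1}|u_2|². Then for all t ∈ (0,1], all r in the simplex, every multi-index α and integer j ≥ 0: (4πt)^{-n(k−1)/2} (Π_{i=1}^k r_i^{-n/2}) ∫_{ℝ^{n(k−1)}} |u^α| Q_r(u)^j e^{-Q_r(u)/(4t)} du ≤ C(j,α,k,n) t^{j+|α|/2}. -/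
open Real Set MeasureTheory

/-- Extend `(u_2,…,u_k)` cyclically by `0` at both ends: `v_0 = v_k = 0`,
`v_i = u_{i+1}` for `1 ≤ i ≤ k−1`. -/
noncomputable def chainExt {k n : ℕ} (u : Fin (k - 1) → EuclideanSpace ℝ (Fin n))
    (i : Fin (k + 1)) : EuclideanSpace ℝ (Fin n) :=
  if h : 1 ≤ (i : ℕ) ∧ (i : ℕ) ≤ k - 1 then u ⟨(i : ℕ) - 1, by omega⟩ else 0

/-- The cyclic quadratic form
`Q_r(u) = r_k⁻¹|u_k|² + ∑_{j=2}^{k-1} r_j⁻¹|u_{j+1}−u_j|² + r_1⁻¹|u_2|²`. -/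
noncomputable def Qform {k n : ℕ} (r : Fin k → ℝ)
    (u : Fin (k - 1) → EuclideanSpace ℝ (Fin n)) : ℝ :=
  ∑ j : Fin k, (r j)⁻¹ * ‖chainExt u j.succ - chainExt u j.castSucc‖ ^ 2


lemma aux_rpow_le_exp (q : ℝ) (hq : 0 ≤ q) :
    ∃ C : ℝ, 0 < C ∧ ∀ x : ℝ, 0 ≤ x → x ^ q ≤ C * Real.exp x := by
  refine ⟨(Nat.factorial (Nat.ceil q) : ℝ), by positivity, fun x hx => ?_⟩
  rcases le_total x 1 with h1 | h1
  · calc x ^ q ≤ 1 := Real.rpow_le_one hx h1 hq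
    _ ≤ (Nat.factorial (Nat.ceil q) : ℝ) * Real.exp x := by
        have h2 : (1:ℝ) ≤ (Nat.factorial (Nat.ceil q) : ℝ) := by
          exact_mod_cast Nat.one_le_iff_ne_zero.mpr (Nat.factorial_ne_zero _)
        nlinarith [Real.one_le_exp hx]
  · calc x ^ q ≤ x ^ ((Nat.ceil q : ℕ) : ℝ) :=
        Real.rpow_le_rpow_of_exponent_le h1 (Nat.le_ceil q)
    _ = x ^ (Nat.ceil q : ℕ) := Real.rpow_natCast x _
    _ ≤ (Nat.factorial (Nat.ceil q) : ℝ) * Real.exp x := by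
        have h3 := Real.pow_div_factorial_le_exp x (le_trans zero_le_one h1) (Nat.ceil q)
        have h2 : (0:ℝ) < (Nat.factorial (Nat.ceil q) : ℝ) := by positivity
        rw [div_le_iff₀ h2] at h3
        linarith [h3]

variable {n : ℕ}

lemma aux_gauss_integrable {b : ℝ} (hb : 0 < b) :
    Integrable (fun v : EuclideanSpace ℝ (Fin n) => Real.exp (-b * ‖v‖ ^ 2)) := by
  have h := GaussianFourier.integrable_cexp_neg_mul_sq_norm_add (V := EuclideanSpace ℝ (Fin n))
    (b := (b:ℂ)) (by simpa using hb) 0 0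
  simp only [zero_mul, add_zero] at h
  have h2 := h.re
  refine h2.congr (Filter.Eventually.of_forall fun v => ?_)
  show (Complex.exp _).re = _
  rw [show ((-b : ℂ) * (‖v‖:ℂ) ^ 2) = ((-b * ‖v‖^2 : ℝ) : ℂ) by push_cast; ring,
    ← Complex.ofReal_exp, Complex.ofReal_re]

lemma aux_gauss_integral {b : ℝ} (hb : 0 < b) :
    ∫ v : EuclideanSpace ℝ (Fin n), Real.exp (-b * ‖v‖ ^ 2) = (π / b) ^ ((n : ℝ) / 2) := by
  rw [show (fun v : EuclideanSpace ℝ (Fin n) => Real.exp (-b * ‖v‖ ^ 2))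
      = (fun v : EuclideanSpace ℝ (Fin n) => Real.exp (-(b * ‖v‖ ^ 2))) by funext v; ring_nf]
  have := GaussianFourier.integral_rexp_neg_mul_sq_norm (V := EuclideanSpace ℝ (Fin n)) hb
  simp only [neg_mul] at this ⊢
  rw [this, finrank_euclideanSpace_fin]

variable {n : ℕ}

local notation "E" => EuclideanSpace ℝ (Fin n)

lemma aux_measurable_insertNth {p : ℕ} (i₀ : Fin (p + 1)) :
    Measurable (fun y : Fin p → E => Fin.insertNth (α := fun _ : Fin (p + 1) => E) i₀ (0 : E) y) := by
  apply measurable_pi_lambda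
  intro j
  refine Fin.succAboveCases (α := fun j => Measurable fun y : Fin p → E =>
    Fin.insertNth (α := fun _ : Fin (p + 1) => E) i₀ (0 : E) y j) i₀ ?_ ?_ j
  · simp only [Fin.insertNth_apply_same]; exact measurable_const
  · intro b
    simp only [Fin.insertNth_apply_succAbove]
    exact measurable_pi_apply b

lemma aux_triangular_mp : ∀ (p : ℕ) (ρ : Fin p → ℕ), Function.Injective ρ →
    ∀ f : (i : Fin p) → (Fin p → E) → E, (∀ i, Measurable (f i)) →
    (∀ (i : Fin p) (u v : Fin p → E), (∀ j, ρ j < ρ i → u j = v j) → f i u = f i v) →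
    MeasurePreserving (fun (w : Fin p → E) (i : Fin p) => w i + f i w) volume volume := by
  intro p
  induction p with
  | zero =>
    intro ρ hρ f hfm hdep
    have : (fun (w : Fin 0 → E) (i : Fin 0) => w i + f i w) = id := by
      funext w; funext i; exact i.elim0
    rw [this]; exact MeasurePreserving.id _
  | succ p IH =>
    intro ρ hρ f hfm hdep
    obtain ⟨i₀, -, hmax⟩ := Finset.exists_max_image Finset.univ ρ ⟨0, Finset.mem_univ 0⟩
    have hlt : ∀ j : Fin (p + 1), ρ j < ρ i₀ → j ≠ i₀ := fun j h hj => by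
      subst hj; exact lt_irrefl _ h
    -- the insertNth with 0 agrees off i₀
    have hins : ∀ (w : Fin (p + 1) → E) (j : Fin (p + 1)), j ≠ i₀ →
        Fin.insertNth (α := fun _ : Fin (p + 1) => E) i₀ (0 : E) (fun a => w (i₀.succAbove a)) j = w j := by
      intro w j hj
      obtain ⟨b, rfl⟩ := Fin.exists_succAbove_eq hj
      rw [Fin.insertNth_apply_succAbove]
    set e := MeasurableEquiv.piFinSuccAbove (fun _ : Fin (p + 1) => E) i₀ with he_def
    have he : MeasurePreserving e := volume_preserving_piFinSuccAbove _ i₀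
    set g : (Fin p → E) → E := fun y => f i₀ (Fin.insertNth (α := fun _ : Fin (p + 1) => E) i₀ (0 : E) y) with hg_def
    set f' : (a : Fin p) → (Fin p → E) → E :=
      fun a y => f (i₀.succAbove a) (Fin.insertNth (α := fun _ : Fin (p + 1) => E) i₀ (0 : E) y) with hf'_def
    have hgm : Measurable g := (hfm i₀).comp (aux_measurable_insertNth i₀)
    have hf'm : ∀ a, Measurable (f' a) :=
      fun a => (hfm _).comp (aux_measurable_insertNth i₀)
    have hρ' : Function.Injective (ρ ∘ i₀.succAbove) :=
      hρ.comp (Fin.succAbove_right_injective)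
    have hdep' : ∀ (a : Fin p) (u v : Fin p → E),
        (∀ b, (ρ ∘ i₀.succAbove) b < (ρ ∘ i₀.succAbove) a → u b = v b) → f' a u = f' a v := by
      intro a u v h
      apply hdep
      intro j hj
      have hji : j ≠ i₀ := hlt j (lt_of_lt_of_le hj (hmax _ (Finset.mem_univ _)))
      obtain ⟨b, rfl⟩ := Fin.exists_succAbove_eq hji
      rw [Fin.insertNth_apply_succAbove, Fin.insertNth_apply_succAbove]
      exact h b hj
    have hG : MeasurePreserving (fun (y : Fin p → E) (a : Fin p) => y a + f' a y) volume volume :=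
      IH (ρ ∘ i₀.succAbove) hρ' f' hf'm hdep'
    -- skew product on (Fin p → E) × E
    have hS' : MeasurePreserving
        (fun q : (Fin p → E) × E => ((fun a => q.1 a + f' a q.1), q.2 + g q.1))
        (volume.prod volume) (volume.prod volume) := by
      refine hG.skew_product (g := fun y x => x + g y) ?_ ?_
      · exact measurable_snd.add (hgm.comp measurable_fst)
      · refine Filter.Eventually.of_forall fun y => ?_
        exact measurePreserving_add_right volume (g y) |>.map_eq
    have hswap : MeasurePreserving (Prod.swap : E × (Fin p → E) → (Fin p → E) × E)
        (volume.prod volume) (volume.prod volume) := Measure.measurePreserving_swap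
    have hswap' : MeasurePreserving (Prod.swap : (Fin p → E) × E → E × (Fin p → E))
        (volume.prod volume) (volume.prod volume) := Measure.measurePreserving_swap
    have hcomp : MeasurePreserving
        (e.symm ∘ (Prod.swap ∘ (fun q : (Fin p → E) × E =>
          ((fun a => q.1 a + f' a q.1), q.2 + g q.1)) ∘ Prod.swap) ∘ e) volume volume := by
      exact (he.symm e).comp ((hswap'.comp (hS'.comp hswap)).comp he)
    have heq : (fun (w : Fin (p + 1) → E) (i : Fin (p + 1)) => w i + f i w)
        = e.symm ∘ (Prod.swap ∘ (fun q : (Fin p → E) × E =>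
          ((fun a => q.1 a + f' a q.1), q.2 + g q.1)) ∘ Prod.swap) ∘ e := by
      funext w
      simp only [Function.comp_apply]
      have hew : e w = (w i₀, fun a => w (i₀.succAbove a)) := rfl
      rw [hew]
      simp only [Prod.swap_prod_mk]
      have hesymm : ∀ (x : E) (y : Fin p → E), e.symm (x, y) = Fin.insertNth (α := fun _ : Fin (p + 1) => E) i₀ x y := fun _ _ => rfl
      rw [hesymm]
      funext i
      rcases eq_or_ne i i₀ with rfl | hi
      · rw [Fin.insertNth_apply_same]
        congr 1
        refine (hdep i _ _ fun j hj => ?_).symm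
        exact hins w j (hlt j hj)
      · obtain ⟨b, rfl⟩ := Fin.exists_succAbove_eq hi
        rw [Fin.insertNth_apply_succAbove]
        congr 1
        refine (hdep _ _ _ fun j hj => ?_).symm
        refine hins w j (hlt j (lt_of_lt_of_le hj (hmax _ (Finset.mem_univ _))))
    rw [heq]
    exact hcomp


/-- The triangular "partial sum" shift `f` used for the change of variables. -/
noncomputable def auxF (n p : ℕ) (m : Fin (p + 2)) (i : Fin (p + 1))
    (w : Fin (p + 1) → EuclideanSpace ℝ (Fin n)) : EuclideanSpace ℝ (Fin n) :=
  if (i : ℕ) < (m : ℕ) then ∑ b ∈ Finset.univ.filter (fun b : Fin (p + 1) => (b : ℕ) < (i : ℕ)), w b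
  else ∑ b ∈ Finset.univ.filter (fun b : Fin (p + 1) => (i : ℕ) < (b : ℕ)), w b

noncomputable def auxPhi (n p : ℕ) (m : Fin (p + 2))
    (w : Fin (p + 1) → EuclideanSpace ℝ (Fin n)) (i : Fin (p + 1)) : EuclideanSpace ℝ (Fin n) :=
  w i + auxF n p m i w

lemma auxPhi_val (n p : ℕ) (m : Fin (p + 2)) (w : Fin (p + 1) → EuclideanSpace ℝ (Fin n))
    (c : ℕ) (hc : c < p + 1) :
    auxPhi n p m w ⟨c, hc⟩ =
      if c < (m : ℕ) then ∑ b ∈ Finset.univ.filter (fun b : Fin (p + 1) => (b : ℕ) ≤ c), w b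
      else ∑ b ∈ Finset.univ.filter (fun b : Fin (p + 1) => c ≤ (b : ℕ)), w b := by
  unfold auxPhi auxF
  by_cases h : c < (m : ℕ)
  · rw [if_pos h, if_pos h]
    have hins : Finset.univ.filter (fun b : Fin (p + 1) => (b : ℕ) ≤ c)
        = insert ⟨c, hc⟩ (Finset.univ.filter (fun b : Fin (p + 1) => (b : ℕ) < c)) := by
      ext b
      simp only [Finset.mem_filter, Finset.mem_insert, Finset.mem_univ, true_and, Fin.ext_iff]
      omega
    rw [hins, Finset.sum_insert (by simp)]
  · rw [if_neg h, if_neg h]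
    have hins : Finset.univ.filter (fun b : Fin (p + 1) => c ≤ (b : ℕ))
        = insert ⟨c, hc⟩ (Finset.univ.filter (fun b : Fin (p + 1) => c < (b : ℕ))) := by
      ext b
      simp only [Finset.mem_filter, Finset.mem_insert, Finset.mem_univ, true_and, Fin.ext_iff]
      omega
    rw [hins, Finset.sum_insert (by simp)]

lemma auxPhi_key (n p : ℕ) (m : Fin (p + 2)) (w : Fin (p + 1) → EuclideanSpace ℝ (Fin n))
    (i : Fin (p + 1)) :
    ‖chainExt (k := p + 2) (auxPhi n p m w) (m.succAbove i).succ
      - chainExt (k := p + 2) (auxPhi n p m w) (m.succAbove i).castSucc‖ = ‖w i‖ := by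
  have hCE : ∀ (u : Fin (p + 1) → EuclideanSpace ℝ (Fin n)) (idx : Fin (p + 2 + 1)),
      chainExt (k := p + 2) u idx =
        if h : 1 ≤ (idx : ℕ) ∧ (idx : ℕ) ≤ p + 1 then u ⟨(idx : ℕ) - 1, by omega⟩ else 0 :=
    fun _ _ => rfl
  have hiLt : (i : ℕ) < p + 1 := i.isLt
  rcases lt_or_ge ((i : ℕ)) ((m : ℕ)) with hi | hi
  · -- left case : succAbove is castSucc
    have hsa : ((m.succAbove i : ℕ)) = (i : ℕ) := by
      rw [Fin.succAbove, if_pos (by rw [Fin.lt_def, Fin.coe_castSucc]; exact hi),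
        Fin.coe_castSucc]
    have hv1 : (((m.succAbove i).succ : ℕ)) = (i : ℕ) + 1 := by rw [Fin.val_succ, hsa]
    have hv2 : (((m.succAbove i).castSucc : ℕ)) = (i : ℕ) := by rw [Fin.coe_castSucc, hsa]
    rw [hCE, hCE]
    simp only [hv1, hv2]
    rw [dif_pos ⟨by omega, by omega⟩]
    simp only [Nat.add_sub_cancel]
    rw [auxPhi_val n p m w (i : ℕ) hiLt, if_pos hi]
    rcases Nat.eq_zero_or_pos (i : ℕ) with hi0 | hi0
    · rw [dif_neg (by omega)]
      rw [sub_zero]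
      have hsingle : Finset.univ.filter (fun b : Fin (p + 1) => (b : ℕ) ≤ (i : ℕ)) = {i} := by
        ext b
        simp only [Finset.mem_filter, Finset.mem_univ, true_and, Finset.mem_singleton, Fin.ext_iff]
        omega
      rw [hsingle, Finset.sum_singleton]
    · rw [dif_pos ⟨by omega, by omega⟩]
      rw [auxPhi_val n p m w ((i : ℕ) - 1) (by omega), if_pos (by omega)]
      have hsub : Finset.univ.filter (fun b : Fin (p + 1) => (b : ℕ) ≤ (i : ℕ) - 1)
          ⊆ Finset.univ.filter (fun b : Fin (p + 1) => (b : ℕ) ≤ (i : ℕ)) := by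
        intro b hb
        simp only [Finset.mem_filter, Finset.mem_univ, true_and] at hb ⊢
        omega
      have hdiff : Finset.univ.filter (fun b : Fin (p + 1) => (b : ℕ) ≤ (i : ℕ))
          \ Finset.univ.filter (fun b : Fin (p + 1) => (b : ℕ) ≤ (i : ℕ) - 1) = {i} := by
        ext b
        simp only [Finset.mem_sdiff, Finset.mem_filter, Finset.mem_univ, true_and,
          Finset.mem_singleton, Fin.ext_iff]
        omega
      rw [← Finset.sum_sdiff_eq_sub hsub, hdiff, Finset.sum_singleton]
  · -- right case : succAbove is succ
    have hsa : ((m.succAbove i : ℕ)) = (i : ℕ) + 1 := by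
      rw [Fin.succAbove, if_neg (by rw [Fin.lt_def, Fin.coe_castSucc]; omega), Fin.val_succ]
    have hv1 : (((m.succAbove i).succ : ℕ)) = (i : ℕ) + 2 := by rw [Fin.val_succ, hsa]
    have hv2 : (((m.succAbove i).castSucc : ℕ)) = (i : ℕ) + 1 := by rw [Fin.coe_castSucc, hsa]
    rw [hCE, hCE]
    simp only [hv1, hv2]
    rw [dif_pos (⟨by omega, by omega⟩ : 1 ≤ (i : ℕ) + 1 ∧ (i : ℕ) + 1 ≤ p + 1)]
    simp only [Nat.add_sub_cancel]
    rw [auxPhi_val n p m w (i : ℕ) hiLt, if_neg (by omega)]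
    by_cases hip : (i : ℕ) + 2 ≤ p + 1
    · rw [dif_pos ⟨by omega, hip⟩]
      have : (i : ℕ) + 2 - 1 = (i : ℕ) + 1 := by omega
      simp only [this]
      rw [auxPhi_val n p m w ((i : ℕ) + 1) (by omega), if_neg (by omega)]
      rw [norm_sub_rev]
      have hsub : Finset.univ.filter (fun b : Fin (p + 1) => (i : ℕ) + 1 ≤ (b : ℕ))
          ⊆ Finset.univ.filter (fun b : Fin (p + 1) => (i : ℕ) ≤ (b : ℕ)) := by
        intro b hb
        simp only [Finset.mem_filter, Finset.mem_univ, true_and] at hb ⊢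
        omega
      have hdiff : Finset.univ.filter (fun b : Fin (p + 1) => (i : ℕ) ≤ (b : ℕ))
          \ Finset.univ.filter (fun b : Fin (p + 1) => (i : ℕ) + 1 ≤ (b : ℕ)) = {i} := by
        ext b
        simp only [Finset.mem_sdiff, Finset.mem_filter, Finset.mem_univ, true_and,
          Finset.mem_singleton, Fin.ext_iff]
        omega
      rw [← Finset.sum_sdiff_eq_sub hsub, hdiff, Finset.sum_singleton]
    · rw [dif_neg (by omega)]
      rw [zero_sub, norm_neg]
      have hsingle : Finset.univ.filter (fun b : Fin (p + 1) => (i : ℕ) ≤ (b : ℕ)) = {i} := by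
        ext b
        have := b.isLt
        simp only [Finset.mem_filter, Finset.mem_univ, true_and, Finset.mem_singleton, Fin.ext_iff]
        omega
      rw [hsingle, Finset.sum_singleton]
lemma auxPhi_mp (n p : ℕ) (m : Fin (p + 2)) :
    MeasurePreserving (fun (w : Fin (p + 1) → EuclideanSpace ℝ (Fin n)) (i : Fin (p + 1)) =>
      w i + auxF n p m i w) volume volume := by
  apply aux_triangular_mp (p + 1)
    (fun i : Fin (p + 1) => if (i : ℕ) < (m : ℕ) then (i : ℕ) else (p + 1) + (m : ℕ) - (i : ℕ))
  · intro x y hxy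
    simp only at hxy
    have hx := x.isLt
    have hy := y.isLt
    have hmlt := m.isLt
    apply Fin.ext
    split_ifs at hxy <;> omega
  · intro i
    unfold auxF
    by_cases h : (i : ℕ) < (m : ℕ)
    · simp only [h, if_true]
      exact Finset.measurable_sum _ (fun b _ => (measurable_pi_apply b :
        Measurable fun w : Fin (p + 1) → EuclideanSpace ℝ (Fin n) => w b))
    · simp only [h, if_false]
      exact Finset.measurable_sum _ (fun b _ => (measurable_pi_apply b :
        Measurable fun w : Fin (p + 1) → EuclideanSpace ℝ (Fin n) => w b))
  · intro i u v h
    unfold auxF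
    by_cases hi : (i : ℕ) < (m : ℕ)
    · rw [if_pos hi, if_pos hi]
      refine Finset.sum_congr rfl fun b hb => ?_
      simp only [Finset.mem_filter, Finset.mem_univ, true_and] at hb
      apply h
      rw [if_pos hi, if_pos (by omega)]
      omega
    · rw [if_neg hi, if_neg hi]
      refine Finset.sum_congr rfl fun b hb => ?_
      simp only [Finset.mem_filter, Finset.mem_univ, true_and] at hb
      apply h
      have hbLt := b.isLt
      rw [if_neg hi, if_neg (by omega)]
      omega

lemma aux_xq (a j : ℕ) (x : ℝ) (hx : 0 ≤ x) :
    Real.sqrt x ^ a * x ^ j ≤ x ^ ((j : ℝ) + (a : ℝ) / 2) := by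
  rcases eq_or_lt_of_le hx with h0 | h0
  · rw [← h0]
    by_cases ha : a = 0
    · by_cases hj : j = 0
      · simp [ha, hj]
      · simp only [ha, pow_zero, one_mul, zero_pow hj]
        exact Real.rpow_nonneg le_rfl _
    · rw [Real.sqrt_zero, zero_pow ha, zero_mul]
      exact Real.rpow_nonneg le_rfl _
  · apply le_of_eq
    rw [Real.sqrt_eq_rpow, ← Real.rpow_natCast (x ^ (1/2 : ℝ)) a, ← Real.rpow_mul hx,
      ← Real.rpow_natCast x j, ← Real.rpow_add h0]
    congr 1
    ring


set_option maxHeartbeats 3000000 in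
/-- Uniform Gaussian moment bound over the simplex:
`(4πt)^{-n(k−1)/2} (∏ r_i^{-n/2}) ∫ |u^α| Q_r(u)^j e^{-Q_r(u)/4t} du
  ≤ C(j,α,k,n) t^{j+|α|/2}` for `t ∈ (0,1]` and `r` in the open simplex. -/
theorem stmt_16 (n k : ℕ) (hn : 1 ≤ n) (hk : 2 ≤ k) (j : ℕ)
    (α : Fin (k - 1) → Fin n → ℕ) :
    ∃ C : ℝ, 0 < C ∧
      ∀ t ∈ Ioc (0:ℝ) 1, ∀ r : Fin k → ℝ,
        (∀ i, 0 < r i) → (∑ i, r i = 1) →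
        (4 * π * t) ^ (-((n * (k - 1) : ℕ) : ℝ) / 2)
            * (∏ i, (r i) ^ (-(n : ℝ) / 2))
            * ∫ u : Fin (k - 1) → EuclideanSpace ℝ (Fin n),
                (∏ i, ∏ l, |u i l| ^ (α i l)) * (Qform r u) ^ j
                  * Real.exp (-(Qform r u) / (4 * t))
          ≤ C * t ^ ((j : ℝ) + ((∑ i, ∑ l, α i l : ℕ) : ℝ) / 2) := by
  obtain ⟨p, rfl⟩ : ∃ p, k = p + 2 := ⟨k - 2, by omega⟩
  clear hk
  have hq0 : (0:ℝ) ≤ (j : ℝ) + ((∑ i, ∑ l, α i l : ℕ) : ℝ) / 2 := by positivity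
  obtain ⟨Cq, hCq0, hCq⟩ := aux_rpow_le_exp _ hq0
  refine ⟨((((p:ℝ)+2) * 8) ^ (((∑ i, ∑ l, α i l : ℕ) : ℝ)/2) * 8 ^ j * Cq)
      * 2 ^ ((n:ℝ) * ((p:ℝ)+1) / 2) * ((p:ℝ)+2) ^ ((n:ℝ)/2), by positivity, ?_⟩
  rintro t ⟨ht0, ht1⟩ r hr hsum
  show (4 * π * t) ^ (-((n * (p + 1) : ℕ) : ℝ) / 2)
            * (∏ i, (r i) ^ (-(n : ℝ) / 2))
            * ∫ u : Fin (p + 1) → EuclideanSpace ℝ (Fin n),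
                (∏ i, ∏ l, |u i l| ^ (α i l)) * (Qform r u) ^ j
                  * Real.exp (-(Qform r u) / (4 * t))
          ≤ ((((p:ℝ)+2) * 8) ^ (((∑ i, ∑ l, α i l : ℕ) : ℝ)/2) * 8 ^ j * Cq)
      * 2 ^ ((n:ℝ) * ((p:ℝ)+1) / 2) * ((p:ℝ)+2) ^ ((n:ℝ)/2)
      * t ^ ((j : ℝ) + ((∑ i, ∑ l, α i l : ℕ) : ℝ) / 2)
  set a : ℕ := ∑ i, ∑ l, α i l with ha
  set q : ℝ := (j : ℝ) + (a : ℝ) / 2 with hq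
  set B0 : ℝ := (((p:ℝ)+2) * 8) ^ ((a : ℝ)/2) * 8 ^ j * Cq with hB0
  have hB0pos : 0 < B0 := by positivity
  set s : ℝ := (n : ℝ) * ((p : ℝ) + 1) / 2 with hs
  have htne : t ≠ 0 := ne_of_gt ht0
  have hp2 : (0:ℝ) < (p:ℝ) + 2 := by positivity
  -- basic facts about r
  have hrle : ∀ i, r i ≤ 1 := fun i => by
    rw [← hsum]
    exact Finset.single_le_sum (fun b _ => (hr b).le) (Finset.mem_univ i)
  have hrinv : ∀ i, 1 ≤ (r i)⁻¹ := fun i => (one_le_inv₀ (hr i)).mpr (hrle i)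
  obtain ⟨m, hm⟩ : ∃ m : Fin (p + 2), ((p : ℝ) + 2)⁻¹ ≤ r m := by
    by_contra hcon
    push_neg at hcon
    have h1 : (∑ i, r i) < ∑ _i : Fin (p + 2), ((p : ℝ) + 2)⁻¹ :=
      Finset.sum_lt_sum_of_nonempty ⟨0, Finset.mem_univ 0⟩ fun i _ => hcon i
    rw [hsum, Finset.sum_const, Finset.card_univ, Fintype.card_fin, nsmul_eq_mul] at h1
    have h2 : ((p:ℕ) + 2 : ℝ) * ((p : ℝ) + 2)⁻¹ = 1 := by
      push_cast
      exact mul_inv_cancel₀ (ne_of_gt hp2)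
    push_cast at h1
    rw [h2] at h1
    exact lt_irrefl _ h1
  have hQ0 : ∀ u : Fin (p + 1) → EuclideanSpace ℝ (Fin n), 0 ≤ Qform r u := fun u =>
    Finset.sum_nonneg fun jj _ => mul_nonneg (inv_nonneg.mpr (hr jj).le) (by positivity)
  have hCE : ∀ (u : Fin (p + 1) → EuclideanSpace ℝ (Fin n)) (idx : Fin (p + 2 + 1)),
      chainExt (k := p + 2) u idx =
        if h : 1 ≤ (idx : ℕ) ∧ (idx : ℕ) ≤ p + 1 then u ⟨(idx : ℕ) - 1, by omega⟩ else 0 :=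
    fun _ _ => rfl
  -- telescoping sum for chainExt
  have htel : ∀ (u : Fin (p + 1) → EuclideanSpace ℝ (Fin n)) (cn : ℕ) (hc : cn ≤ p + 2),
      chainExt (k := p + 2) u ⟨cn, by omega⟩ =
        ∑ jj ∈ Finset.univ.filter (fun jj : Fin (p + 2) => (jj : ℕ) < cn),
          (chainExt u jj.succ - chainExt u jj.castSucc) := by
    intro u cn
    induction cn with
    | zero =>
      intro _
      rw [hCE, dif_neg (show ¬(1 ≤ (0:ℕ) ∧ (0:ℕ) ≤ p + 1) by omega)]
      rw [Finset.filter_false_of_mem (fun b _ => by omega), Finset.sum_empty]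
    | succ cn IH =>
      intro hc
      have hcc : cn < p + 2 := by omega
      have hins : Finset.univ.filter (fun jj : Fin (p + 2) => (jj : ℕ) < cn + 1)
          = insert ⟨cn, hcc⟩ (Finset.univ.filter (fun jj : Fin (p + 2) => (jj : ℕ) < cn)) := by
        ext b
        simp only [Finset.mem_filter, Finset.mem_insert, Finset.mem_univ, true_and, Fin.ext_iff]
        omega
      rw [hins, Finset.sum_insert (by simp), ← IH (by omega)]
      have h1 : (⟨cn, hcc⟩ : Fin (p + 2)).succ = (⟨cn + 1, by omega⟩ : Fin (p + 2 + 1)) := rfl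
      have h2 : (⟨cn, hcc⟩ : Fin (p + 2)).castSucc = (⟨cn, by omega⟩ : Fin (p + 2 + 1)) := rfl
      rw [h1, h2, sub_add_cancel]
  -- coordinate bound
  have hcoord : ∀ (x : EuclideanSpace ℝ (Fin n)) (l : Fin n), (x l) ^ 2 ≤ ‖x‖ ^ 2 := by
    intro x l
    rw [EuclideanSpace.norm_eq, Real.sq_sqrt (by positivity)]
    have h1 : (x l) ^ 2 = ‖x l‖ ^ 2 := by rw [Real.norm_eq_abs, sq_abs]
    rw [h1]
    exact Finset.single_le_sum (f := fun l => ‖x l‖ ^ 2) (fun _ _ => by positivity)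
      (Finset.mem_univ l)
  have hnorm : ∀ (u : Fin (p + 1) → EuclideanSpace ℝ (Fin n)) (i : Fin (p + 1)) (l : Fin n),
      |u i l| ≤ Real.sqrt (((p:ℝ) + 2) * Qform r u) := by
    intro u i l
    have hui : u i = chainExt (k := p + 2) u ⟨(i : ℕ) + 1, by omega⟩ := by
      rw [hCE, dif_pos (show 1 ≤ (i:ℕ) + 1 ∧ (i:ℕ) + 1 ≤ p + 1 from ⟨by omega, by omega⟩)]
      exact (congrArg u (Fin.ext (by simp))).symm
    have h1 : ‖u i‖ ≤ ∑ jj : Fin (p + 2), ‖chainExt u jj.succ - chainExt u jj.castSucc‖ := by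
      rw [hui, htel u ((i : ℕ) + 1) (by omega)]
      refine le_trans (norm_sum_le _ _) ?_
      exact Finset.sum_le_sum_of_subset_of_nonneg (Finset.filter_subset _ _)
        (fun _ _ _ => norm_nonneg _)
    have h2 : (∑ jj : Fin (p + 2), ‖chainExt u jj.succ - chainExt u jj.castSucc‖) ^ 2
        ≤ ((p:ℝ) + 2) * ∑ jj : Fin (p + 2), ‖chainExt u jj.succ - chainExt u jj.castSucc‖ ^ 2 := by
      have h3 := sq_sum_le_card_mul_sum_sq (s := (Finset.univ : Finset (Fin (p + 2))))
        (f := fun jj => ‖chainExt u jj.succ - chainExt u jj.castSucc‖)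
      rw [Finset.card_univ, Fintype.card_fin] at h3
      calc (∑ jj : Fin (p + 2), ‖chainExt u jj.succ - chainExt u jj.castSucc‖) ^ 2
          ≤ ((p + 2 : ℕ) : ℝ) * ∑ jj : Fin (p + 2),
              ‖chainExt u jj.succ - chainExt u jj.castSucc‖ ^ 2 := h3
        _ = ((p:ℝ) + 2) * ∑ jj : Fin (p + 2),
              ‖chainExt u jj.succ - chainExt u jj.castSucc‖ ^ 2 := by push_cast; ring
    have h3 : ∑ jj : Fin (p + 2), ‖chainExt u jj.succ - chainExt u jj.castSucc‖ ^ 2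
        ≤ Qform r u :=
      Finset.sum_le_sum fun jj _ => le_mul_of_one_le_left (by positivity) (hrinv jj)
    calc |u i l| = Real.sqrt ((u i l) ^ 2) := (Real.sqrt_sq_eq_abs _).symm
      _ ≤ Real.sqrt (((p:ℝ) + 2) * Qform r u) := by
          apply Real.sqrt_le_sqrt
          have h4 := hcoord (u i) l
          have h5 : ‖u i‖ ^ 2 ≤ (∑ jj : Fin (p + 2),
              ‖chainExt u jj.succ - chainExt u jj.castSucc‖) ^ 2 :=
            pow_le_pow_left₀ (norm_nonneg _) h1 2
          nlinarith [hp2]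
  -- product bound
  have hP : ∀ u : Fin (p + 1) → EuclideanSpace ℝ (Fin n),
      (∏ i, ∏ l, |u i l| ^ α i l) ≤ Real.sqrt (((p:ℝ) + 2) * Qform r u) ^ a := by
    intro u
    calc (∏ i, ∏ l, |u i l| ^ α i l)
        ≤ ∏ i, ∏ l, Real.sqrt (((p:ℝ) + 2) * Qform r u) ^ α i l := by
          refine Finset.prod_le_prod (fun i _ => Finset.prod_nonneg fun l _ => by positivity)
            (fun i _ => ?_)
          refine Finset.prod_le_prod (fun l _ => by positivity) (fun l _ => ?_)
          exact pow_le_pow_left₀ (abs_nonneg _) (hnorm u i l) _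
      _ = Real.sqrt (((p:ℝ) + 2) * Qform r u) ^ a := by
          rw [ha]
          simp_rw [Finset.prod_pow_eq_pow_sum]
  -- sqrt-power identity
  have hsqp : ∀ cc : ℝ, 0 ≤ cc → Real.sqrt cc ^ a = cc ^ ((a : ℝ) / 2) := by
    intro cc hcc
    rw [Real.sqrt_eq_rpow, ← Real.rpow_natCast (cc ^ (1/2 : ℝ)) a, ← Real.rpow_mul hcc]
    congr 1
    ring
  -- gaussian pointwise bound
  have hF4c : ∀ u : Fin (p + 1) → EuclideanSpace ℝ (Fin n),
      Real.sqrt (((p:ℝ) + 2) * Qform r u) ^ a * Qform r u ^ j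
          * Real.exp (-Qform r u / (4 * t))
        ≤ B0 * t ^ q * Real.exp (-(Qform r u * (8 * t)⁻¹)) := by
    intro u
    have hQ : 0 ≤ Qform r u := hQ0 u
    set x : ℝ := Qform r u * (8 * t)⁻¹ with hx
    have hx0 : 0 ≤ x := mul_nonneg hQ (by positivity)
    have hQx : Qform r u = 8 * t * x := by rw [hx]; field_simp
    have e1 : ((p:ℝ) + 2) * Qform r u = (((p:ℝ) + 2) * 8 * t) * x := by rw [hQx]; ring
    have e3 : -Qform r u / (4 * t) = -x + -x := by rw [hQx]; field_simp; ring
    have e2 : Qform r u ^ j = (8 * t) ^ j * x ^ j := by rw [hQx, mul_pow]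
    calc Real.sqrt (((p:ℝ) + 2) * Qform r u) ^ a * Qform r u ^ j
          * Real.exp (-Qform r u / (4 * t))
        = (Real.sqrt ((((p:ℝ) + 2) * 8) * t) ^ a * (8 * t) ^ j)
            * (Real.sqrt x ^ a * x ^ j * Real.exp (-x)) * Real.exp (-x) := by
          rw [e1, e2, e3, Real.exp_add,
            show (((p:ℝ) + 2) * 8 * t) * x = ((((p:ℝ) + 2) * 8) * t) * x by ring,
            Real.sqrt_mul (by positivity) x, mul_pow]
          ring
      _ ≤ (Real.sqrt ((((p:ℝ) + 2) * 8) * t) ^ a * (8 * t) ^ j)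
            * (x ^ q * Real.exp (-x)) * Real.exp (-x) := by
          have h1 : Real.sqrt x ^ a * x ^ j ≤ x ^ q := aux_xq a j x hx0
          have hnn : (0:ℝ) ≤ Real.sqrt ((((p:ℝ) + 2) * 8) * t) ^ a * (8 * t) ^ j := by positivity
          refine mul_le_mul_of_nonneg_right (mul_le_mul_of_nonneg_left ?_ hnn)
            (Real.exp_pos _).le
          exact mul_le_mul_of_nonneg_right h1 (Real.exp_pos _).le
      _ ≤ (Real.sqrt ((((p:ℝ) + 2) * 8) * t) ^ a * (8 * t) ^ j)
            * ((Cq * Real.exp x) * Real.exp (-x)) * Real.exp (-x) := by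
          have hnn : (0:ℝ) ≤ Real.sqrt ((((p:ℝ) + 2) * 8) * t) ^ a * (8 * t) ^ j := by positivity
          refine mul_le_mul_of_nonneg_right (mul_le_mul_of_nonneg_left ?_ hnn)
            (Real.exp_pos _).le
          exact mul_le_mul_of_nonneg_right (hCq x hx0) (Real.exp_pos _).le
      _ = (Real.sqrt ((((p:ℝ) + 2) * 8) * t) ^ a * (8 * t) ^ j) * Cq * Real.exp (-x) := by
          rw [mul_assoc Cq, ← Real.exp_add, add_neg_cancel, Real.exp_zero, mul_one]
      _ = B0 * t ^ q * Real.exp (-x) := by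
          rw [Real.sqrt_mul (by positivity : (0:ℝ) ≤ ((p:ℝ) + 2) * 8) t, mul_pow,
            hsqp (((p:ℝ) + 2) * 8) (by positivity), hsqp t ht0.le, mul_pow 8 t j]
          have hta : t ^ ((a:ℝ)/2) * t ^ j = t ^ q := by
            rw [← Real.rpow_natCast t j, ← Real.rpow_add ht0, hq]
            congr 1
            ring
          rw [hB0, ← hta]
          ring
  -- choose the dropped index and set up the Gaussian product
  set sA : Fin (p + 1) → Fin (p + 2) := m.succAbove with hsA
  set c : Fin (p + 1) → ℝ := fun i => (8 * t)⁻¹ * (r (sA i))⁻¹ with hc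
  have hcpos : ∀ i, 0 < c i := fun i => by
    rw [hc]
    exact mul_pos (inv_pos.mpr (by linarith)) (inv_pos.mpr (hr _))
  set H : (Fin (p + 1) → EuclideanSpace ℝ (Fin n)) → ℝ := fun u => ∏ i : Fin (p + 1),
    Real.exp (-(c i * ‖chainExt (k := p + 2) u (sA i).succ
      - chainExt (k := p + 2) u (sA i).castSucc‖ ^ 2)) with hH
  have hF4d : ∀ u : Fin (p + 1) → EuclideanSpace ℝ (Fin n),
      Real.exp (-(Qform r u * (8 * t)⁻¹)) ≤ H u := by
    intro u
    show Real.exp (-(Qform r u * (8 * t)⁻¹)) ≤ ∏ i : Fin (p + 1),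
      Real.exp (-(c i * ‖chainExt (k := p + 2) u (sA i).succ
        - chainExt (k := p + 2) u (sA i).castSucc‖ ^ 2))
    rw [← Real.exp_sum]
    apply Real.exp_le_exp.mpr
    have hsplit : Qform r u * (8 * t)⁻¹
        = (r m)⁻¹ * ‖chainExt u m.succ - chainExt u m.castSucc‖ ^ 2 * (8 * t)⁻¹
          + ∑ i : Fin (p + 1), c i * ‖chainExt (k := p + 2) u (sA i).succ
              - chainExt (k := p + 2) u (sA i).castSucc‖ ^ 2 := by
      rw [show Qform r u = ∑ jj : Fin (p + 2),
          (r jj)⁻¹ * ‖chainExt u jj.succ - chainExt u jj.castSucc‖ ^ 2 from rfl]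
      rw [Finset.sum_mul, Fin.sum_univ_succAbove (fun jj => (r jj)⁻¹
        * ‖chainExt u jj.succ - chainExt u jj.castSucc‖ ^ 2 * (8 * t)⁻¹) m]
      congr 1
      refine Finset.sum_congr rfl fun i _ => ?_
      rw [hc, hsA]
      ring
    rw [hsplit]
    have h0 : 0 ≤ (r m)⁻¹ * ‖chainExt u m.succ - chainExt u m.castSucc‖ ^ 2 * (8 * t)⁻¹ :=
      mul_nonneg (mul_nonneg (inv_nonneg.mpr (hr m).le) (by positivity))
        (inv_nonneg.mpr (by linarith))
    have h1 : ∑ i : Fin (p + 1), -(c i * ‖chainExt (k := p + 2) u (sA i).succ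
        - chainExt (k := p + 2) u (sA i).castSucc‖ ^ 2)
        = -(∑ i : Fin (p + 1), c i * ‖chainExt (k := p + 2) u (sA i).succ
            - chainExt (k := p + 2) u (sA i).castSucc‖ ^ 2) := by
      rw [Finset.sum_neg_distrib]
    rw [h1]
    linarith
  -- continuity of H
  have hCEcont : ∀ idx : Fin (p + 2 + 1),
      Continuous (fun u : Fin (p + 1) → EuclideanSpace ℝ (Fin n) =>
        chainExt (k := p + 2) u idx) := by
    intro idx
    by_cases h : 1 ≤ (idx : ℕ) ∧ (idx : ℕ) ≤ p + 1
    · have heq : (fun u : Fin (p + 1) → EuclideanSpace ℝ (Fin n) => chainExt (k := p + 2) u idx)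
          = fun u => u ⟨(idx : ℕ) - 1, by omega⟩ := funext fun u => by rw [hCE, dif_pos h]
      rw [heq]
      exact continuous_apply _
    · have heq : (fun u : Fin (p + 1) → EuclideanSpace ℝ (Fin n) => chainExt (k := p + 2) u idx)
          = fun _ => 0 := funext fun u => by rw [hCE, dif_neg h]
      rw [heq]
      exact continuous_const
  have hHcont : Continuous H := by
    rw [hH]
    refine continuous_finset_prod _ fun i _ => Real.continuous_exp.comp ?_
    exact (continuous_const.mul ((((hCEcont _).sub (hCEcont _)).norm).pow 2)).neg
  -- the change of variables
  have hΦmp : MeasurePreserving (auxPhi n p m) volume volume := auxPhi_mp n p m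
  have hHΦ : ∀ w : Fin (p + 1) → EuclideanSpace ℝ (Fin n),
      H (auxPhi n p m w) = ∏ i : Fin (p + 1), Real.exp (-(c i * ‖w i‖ ^ 2)) := by
    intro w
    show (∏ i : Fin (p + 1), Real.exp (-(c i * ‖chainExt (k := p + 2) (auxPhi n p m w) (sA i).succ
      - chainExt (k := p + 2) (auxPhi n p m w) (sA i).castSucc‖ ^ 2)))
        = ∏ i : Fin (p + 1), Real.exp (-(c i * ‖w i‖ ^ 2))
    refine Finset.prod_congr rfl fun i _ => ?_
    rw [hsA, auxPhi_key n p m w i]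
  have hgi : ∀ i : Fin (p + 1),
      Integrable (fun v : EuclideanSpace ℝ (Fin n) => Real.exp (-(c i * ‖v‖ ^ 2))) := by
    intro i
    have h1 := aux_gauss_integrable (n := n) (hcpos i)
    refine h1.congr (Filter.Eventually.of_forall fun v => ?_)
    simp only [neg_mul]
  have hgv : ∀ i : Fin (p + 1),
      (∫ v : EuclideanSpace ℝ (Fin n), Real.exp (-(c i * ‖v‖ ^ 2)))
        = (π / c i) ^ ((n : ℝ) / 2) := by
    intro i
    rw [← aux_gauss_integral (n := n) (hcpos i)]
    refine integral_congr_ae (Filter.Eventually.of_forall fun v => ?_)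
    simp only [neg_mul]
  have hGint : Integrable (fun w : Fin (p + 1) → EuclideanSpace ℝ (Fin n) =>
      ∏ i : Fin (p + 1), Real.exp (-(c i * ‖w i‖ ^ 2))) :=
    Integrable.fintype_prod (f := fun i (v : EuclideanSpace ℝ (Fin n)) =>
      Real.exp (-(c i * ‖v‖ ^ 2))) hgi
  have hGval : (∫ w : Fin (p + 1) → EuclideanSpace ℝ (Fin n),
      ∏ i : Fin (p + 1), Real.exp (-(c i * ‖w i‖ ^ 2)))
        = ∏ i : Fin (p + 1), (π / c i) ^ ((n : ℝ) / 2) := by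
    rw [integral_fintype_prod_volume_eq_prod (f := fun i (v : EuclideanSpace ℝ (Fin n)) =>
      Real.exp (-(c i * ‖v‖ ^ 2)))]
    exact Finset.prod_congr rfl fun i _ => hgv i
  have hHint : Integrable H := by
    rw [← hΦmp.map_eq, integrable_map_measure hHcont.aestronglyMeasurable
      hΦmp.measurable.aemeasurable]
    exact hGint.congr (Filter.Eventually.of_forall fun w => ((hHΦ w).symm))
  have hHval : (∫ u : Fin (p + 1) → EuclideanSpace ℝ (Fin n), H u)
      = ∏ i : Fin (p + 1), (π / c i) ^ ((n : ℝ) / 2) := by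
    rw [← hΦmp.map_eq, integral_map hΦmp.measurable.aemeasurable hHcont.aestronglyMeasurable,
      ← hGval]
    exact integral_congr_ae (Filter.Eventually.of_forall fun w => hHΦ w)
  -- pointwise master bound
  have hptwise : ∀ u : Fin (p + 1) → EuclideanSpace ℝ (Fin n),
      (∏ i, ∏ l, |u i l| ^ α i l) * Qform r u ^ j * Real.exp (-Qform r u / (4 * t))
        ≤ B0 * t ^ q * H u := by
    intro u
    have h1 : (∏ i, ∏ l, |u i l| ^ α i l) * Qform r u ^ j * Real.exp (-Qform r u / (4 * t))
        ≤ Real.sqrt (((p:ℝ) + 2) * Qform r u) ^ a * Qform r u ^ j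
            * Real.exp (-Qform r u / (4 * t)) :=
      mul_le_mul_of_nonneg_right (mul_le_mul_of_nonneg_right (hP u)
        (pow_nonneg (hQ0 u) j)) (Real.exp_pos _).le
    have h3 : B0 * t ^ q * Real.exp (-(Qform r u * (8 * t)⁻¹)) ≤ B0 * t ^ q * H u :=
      mul_le_mul_of_nonneg_left (hF4d u) (by positivity)
    exact le_trans h1 (le_trans (hF4c u) h3)
  -- integrate the bound
  have hIle : (∫ u : Fin (p + 1) → EuclideanSpace ℝ (Fin n),
      (∏ i, ∏ l, |u i l| ^ α i l) * Qform r u ^ j * Real.exp (-Qform r u / (4 * t)))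
        ≤ B0 * t ^ q * ∏ i : Fin (p + 1), (π / c i) ^ ((n : ℝ) / 2) := by
    have hmono : (∫ u : Fin (p + 1) → EuclideanSpace ℝ (Fin n),
        (∏ i, ∏ l, |u i l| ^ α i l) * Qform r u ^ j * Real.exp (-Qform r u / (4 * t)))
          ≤ ∫ u : Fin (p + 1) → EuclideanSpace ℝ (Fin n), B0 * t ^ q * H u := by
      refine integral_mono_of_nonneg (Filter.Eventually.of_forall fun u => ?_)
        (hHint.const_mul _) (Filter.Eventually.of_forall hptwise)
      have hQn := hQ0 u
      positivity
    rw [integral_const_mul, hHval] at hmono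
    exact hmono
  -- final assembly
  have hA0 : (0:ℝ) ≤ (4 * π * t) ^ (-((n * (p + 1) : ℕ) : ℝ) / 2)
      * ∏ i, (r i) ^ (-(n : ℝ) / 2) :=
    mul_nonneg (Real.rpow_nonneg (by positivity) _)
      (Finset.prod_nonneg fun i _ => Real.rpow_nonneg (hr i).le _)
  have hπc : ∀ i : Fin (p + 1), π / c i = 8 * π * t * r (sA i) := by
    intro i
    rw [hc]
    have h1 : r (sA i) ≠ 0 := (hr _).ne'
    field_simp
  have hprod1 : (∏ i : Fin (p + 1), (π / c i) ^ ((n : ℝ) / 2))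
      = (8 * π * t) ^ s * ∏ i : Fin (p + 1), (r (sA i)) ^ ((n : ℝ) / 2) := by
    calc (∏ i : Fin (p + 1), (π / c i) ^ ((n : ℝ) / 2))
        = ∏ i : Fin (p + 1), ((8 * π * t) ^ ((n : ℝ) / 2) * (r (sA i)) ^ ((n : ℝ) / 2)) :=
          Finset.prod_congr rfl fun i _ => by
            rw [hπc i, Real.mul_rpow (by positivity) (hr _).le]
      _ = ((8 * π * t) ^ ((n : ℝ) / 2)) ^ (p + 1)
            * ∏ i : Fin (p + 1), (r (sA i)) ^ ((n : ℝ) / 2) := by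
          rw [Finset.prod_mul_distrib, Finset.prod_const, Finset.card_univ, Fintype.card_fin]
      _ = (8 * π * t) ^ s * ∏ i : Fin (p + 1), (r (sA i)) ^ ((n : ℝ) / 2) := by
          rw [← Real.rpow_natCast ((8 * π * t) ^ ((n : ℝ) / 2)) (p + 1),
            ← Real.rpow_mul (by positivity),
            show ((n : ℝ) / 2) * (((p + 1 : ℕ)) : ℝ) = s from by rw [hs]; push_cast; ring]
  have hprod2 : (∏ i : Fin (p + 2), (r i) ^ (-(n : ℝ) / 2))
      = r m ^ (-(n : ℝ) / 2) * ∏ i : Fin (p + 1), (r (sA i)) ^ (-(n : ℝ) / 2) := by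
    rw [hsA]
    exact Fin.prod_univ_succAbove (fun jj => (r jj) ^ (-(n : ℝ) / 2)) m
  have hprod3 : (∏ i : Fin (p + 1), (r (sA i)) ^ (-(n : ℝ) / 2))
      * ∏ i : Fin (p + 1), (r (sA i)) ^ ((n : ℝ) / 2) = 1 := by
    rw [← Finset.prod_mul_distrib]
    refine Finset.prod_eq_one fun i _ => ?_
    rw [neg_div, Real.rpow_neg (hr _).le,
      inv_mul_cancel₀ (ne_of_gt (Real.rpow_pos_of_pos (hr _) _))]
  have hexps : -(((n * (p + 1) : ℕ)) : ℝ) / 2 = -s := by rw [hs]; push_cast; ring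
  have hpow2 : (4 * π * t) ^ (-s) * (8 * π * t) ^ s = 2 ^ s := by
    rw [Real.rpow_neg (by positivity), ← Real.inv_rpow (by positivity),
      ← Real.mul_rpow (by positivity) (by positivity),
      show (4 * π * t)⁻¹ * (8 * π * t) = 2 from by
        field_simp
        ring]
  have hrm : r m ^ (-(n : ℝ) / 2) ≤ ((p:ℝ) + 2) ^ ((n : ℝ) / 2) := by
    have h1 : (r m)⁻¹ ≤ (p:ℝ) + 2 := by
      nlinarith [mul_le_mul_of_nonneg_left hm hp2.le, mul_inv_cancel₀ (ne_of_gt hp2),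
        mul_inv_cancel₀ (ne_of_gt (hr m)), inv_pos.mpr (hr m)]
    calc r m ^ (-(n : ℝ) / 2) = ((r m)⁻¹) ^ ((n : ℝ) / 2) := by
          rw [neg_div, Real.rpow_neg (hr m).le, ← Real.inv_rpow (hr m).le]
      _ ≤ ((p:ℝ) + 2) ^ ((n : ℝ) / 2) :=
          Real.rpow_le_rpow (inv_nonneg.mpr (hr m).le) h1 (by positivity)
  calc (4 * π * t) ^ (-((n * (p + 1) : ℕ) : ℝ) / 2) * (∏ i, (r i) ^ (-(n : ℝ) / 2))
        * ∫ u : Fin (p + 1) → EuclideanSpace ℝ (Fin n),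
            (∏ i, ∏ l, |u i l| ^ (α i l)) * (Qform r u) ^ j
              * Real.exp (-(Qform r u) / (4 * t))
      ≤ (4 * π * t) ^ (-((n * (p + 1) : ℕ) : ℝ) / 2) * (∏ i, (r i) ^ (-(n : ℝ) / 2))
        * (B0 * t ^ q * ∏ i : Fin (p + 1), (π / c i) ^ ((n : ℝ) / 2)) :=
        mul_le_mul_of_nonneg_left hIle hA0
    _ = B0 * t ^ q * ((4 * π * t) ^ (-s) * (8 * π * t) ^ s) * (r m ^ (-(n : ℝ) / 2))
          * ((∏ i : Fin (p + 1), (r (sA i)) ^ (-(n : ℝ) / 2))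
            * ∏ i : Fin (p + 1), (r (sA i)) ^ ((n : ℝ) / 2)) := by
        rw [hprod1, hprod2, hexps]
        ring
    _ = B0 * t ^ q * 2 ^ s * (r m ^ (-(n : ℝ) / 2)) := by
        rw [hpow2, hprod3, mul_one]
    _ ≤ B0 * t ^ q * 2 ^ s * (((p:ℝ) + 2) ^ ((n : ℝ) / 2)) := by
        refine mul_le_mul_of_nonneg_left hrm ?_
        positivity
    _ = B0 * 2 ^ s * ((p:ℝ) + 2) ^ ((n : ℝ) / 2) * t ^ q := by ring
end
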